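/- arXiv:2508.13683 — 4 statements merged into one kernel-verified Lean document; each statement's English description precedes it below -/
import Mathlib

section
/- Let α ≥ 0 and set C(α) = max{1, 2^{α−1}}. Let a, b : ℤ → ℂ satisfy Σ_k |a_k| < ∞, Σ_k |b_k| < ∞, Σ_k |k|^{2α}|a_k|² < ∞ and Σ_k |k|^{2α}|b_k|² < ∞, and let c : ℤ → ℂ be the convolution c_m = Σ_{k∈ℤ} a_k·b_{m−k}. Then (Σ_m |m|^{2α}|c_m|²)^{1/2} ≤ C(α)·[ (Σ_k |a_k|)·(Σ_k |k|^{2α}|b_k|²)^{1/2} + (Σ_k |b_k|)·(Σ_k |k|^{2α}|a_k|²)^{1/2} ]. -/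
open Real
open scoped BigOperators

section Stmt5Aux

open MeasureTheory
open scoped ENNReal

private lemma tsum_holder (f g : ℤ → ℝ≥0∞) :
    ∑' k, f k * g k ≤ (∑' k, f k ^ (2:ℝ)) ^ (1/2:ℝ) * (∑' k, g k ^ (2:ℝ)) ^ (1/2:ℝ) := by
  have h := ENNReal.lintegral_mul_le_Lp_mul_Lq (Measure.count : Measure ℤ)
      Real.HolderConjugate.two_two
      (measurable_of_countable f).aemeasurable (measurable_of_countable g).aemeasurable
  simpa [lintegral_count, Pi.mul_apply] using h

private lemma tsum_minkowski (f g : ℤ → ℝ≥0∞) :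
    (∑' m, (f m + g m) ^ (2:ℝ)) ^ (1/2:ℝ) ≤
      (∑' m, f m ^ (2:ℝ)) ^ (1/2:ℝ) + (∑' m, g m ^ (2:ℝ)) ^ (1/2:ℝ) := by
  have h := ENNReal.lintegral_Lp_add_le (μ := (Measure.count : Measure ℤ))
      (measurable_of_countable f).aemeasurable (measurable_of_countable g).aemeasurable
      (one_le_two (α := ℝ))
  simpa [lintegral_count, Pi.add_apply] using h

private lemma conv_comm' (u v : ℤ → ℝ≥0∞) (m : ℤ) :
    ∑' k, u k * v (m - k) = ∑' k, v k * u (m - k) := by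
  have h := (Equiv.subLeft m).tsum_eq (fun k => u k * v (m - k))
  rw [← h]
  exact tsum_congr fun x => by simp [Equiv.subLeft, sub_sub_cancel, mul_comm]

private lemma tsum_young (u v : ℤ → ℝ≥0∞) :
    ∑' m, (∑' k, u k * v (m - k)) ^ (2:ℝ) ≤ (∑' k, u k) ^ (2:ℝ) * ∑' k, v k ^ (2:ℝ) := by
  have key : ∀ m : ℤ, (∑' k, u k * v (m - k)) ^ (2:ℝ) ≤
      (∑' k, u k) * ∑' k, u k * v (m - k) ^ (2:ℝ) := by
    intro m
    have e1 : ∀ k : ℤ, u k * v (m - k) = u k ^ (1/2:ℝ) * (u k ^ (1/2:ℝ) * v (m - k)) := by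
      intro k
      rw [← mul_assoc, ← ENNReal.rpow_add_of_nonneg (1/2) (1/2) (by norm_num) (by norm_num)]
      norm_num
    have e2 : ∀ k : ℤ, (u k ^ (1/2:ℝ)) ^ (2:ℝ) = u k := by
      intro k; rw [← ENNReal.rpow_mul]; norm_num
    have h1 : (∑' k, u k * v (m - k)) ≤
        (∑' k, u k) ^ (1/2:ℝ) * (∑' k, u k * v (m - k) ^ (2:ℝ)) ^ (1/2:ℝ) := by
      have h := tsum_holder (fun k => u k ^ (1/2:ℝ)) (fun k => u k ^ (1/2:ℝ) * v (m - k))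
      calc (∑' k, u k * v (m - k))
          = ∑' k, u k ^ (1/2:ℝ) * (u k ^ (1/2:ℝ) * v (m - k)) := tsum_congr e1
        _ ≤ (∑' k, (u k ^ (1/2:ℝ)) ^ (2:ℝ)) ^ (1/2:ℝ) *
              (∑' k, (u k ^ (1/2:ℝ) * v (m - k)) ^ (2:ℝ)) ^ (1/2:ℝ) := h
        _ = (∑' k, u k) ^ (1/2:ℝ) * (∑' k, u k * v (m - k) ^ (2:ℝ)) ^ (1/2:ℝ) := by
            congr 1
            · rw [tsum_congr e2]
            · congr 1
              exact tsum_congr fun k => by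
                rw [ENNReal.mul_rpow_of_nonneg _ _ (by norm_num : (0:ℝ) ≤ 2), e2 k]
    calc (∑' k, u k * v (m - k)) ^ (2:ℝ)
        ≤ ((∑' k, u k) ^ (1/2:ℝ) * (∑' k, u k * v (m - k) ^ (2:ℝ)) ^ (1/2:ℝ)) ^ (2:ℝ) :=
          ENNReal.rpow_le_rpow h1 (by norm_num)
      _ = (∑' k, u k) * ∑' k, u k * v (m - k) ^ (2:ℝ) := by
          rw [ENNReal.mul_rpow_of_nonneg _ _ (by norm_num : (0:ℝ) ≤ 2),
            ← ENNReal.rpow_mul, ← ENNReal.rpow_mul]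
          norm_num
  calc ∑' m, (∑' k, u k * v (m - k)) ^ (2:ℝ)
      ≤ ∑' m, (∑' k, u k) * ∑' k, u k * v (m - k) ^ (2:ℝ) := ENNReal.tsum_le_tsum key
    _ = (∑' k, u k) * ∑' (m : ℤ) (k : ℤ), u k * v (m - k) ^ (2:ℝ) := ENNReal.tsum_mul_left
    _ = (∑' k, u k) * ∑' (k : ℤ) (m : ℤ), u k * v (m - k) ^ (2:ℝ) := by rw [ENNReal.tsum_comm]
    _ = (∑' k, u k) * ∑' k, u k * ∑' m, v (m - k) ^ (2:ℝ) := by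
        congr 1; exact tsum_congr fun k => ENNReal.tsum_mul_left
    _ = (∑' k, u k) * ∑' k, u k * ∑' j, v j ^ (2:ℝ) := by
        congr 1
        refine tsum_congr fun k => ?_
        congr 1
        simpa [Equiv.subRight] using (Equiv.subRight k).tsum_eq (fun j => v j ^ (2:ℝ))
    _ = (∑' k, u k) ^ (2:ℝ) * ∑' k, v k ^ (2:ℝ) := by
        rw [ENNReal.tsum_mul_right, show (2:ℝ) = ((2:ℕ):ℝ) by norm_num, ENNReal.rpow_natCast]
        ring

private lemma weight_bd {α : ℝ} (hα : 0 ≤ α) {x y : ℝ} (hx : 0 ≤ x) (hy : 0 ≤ y) :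
    ENNReal.ofReal ((x + y) ^ α) ≤
      ENNReal.ofReal (max 1 ((2:ℝ) ^ (α - 1))) *
        (ENNReal.ofReal (x ^ α) + ENNReal.ofReal (y ^ α)) := by
  have hC1 : (1:ℝ≥0∞) ≤ ENNReal.ofReal (max 1 ((2:ℝ) ^ (α - 1))) := by
    rw [ENNReal.one_le_ofReal]; exact le_max_left _ _
  rw [← ENNReal.ofReal_rpow_of_nonneg (add_nonneg hx hy) hα,
    ← ENNReal.ofReal_rpow_of_nonneg hx hα, ← ENNReal.ofReal_rpow_of_nonneg hy hα,
    ENNReal.ofReal_add hx hy]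
  rcases le_total α 1 with h1 | h1
  · exact (ENNReal.rpow_add_le_add_rpow _ _ hα h1).trans
      (le_mul_of_one_le_left zero_le hC1)
  · refine (ENNReal.rpow_add_le_mul_rpow_add_rpow _ _ h1).trans (mul_le_mul_left ?_ _)
    have h2 : (2:ℝ≥0∞) = ENNReal.ofReal 2 := by norm_num
    rw [h2, ENNReal.ofReal_rpow_of_nonneg (by norm_num) (by linarith)]
    exact ENNReal.ofReal_le_ofReal (le_max_right _ _)

private lemma sq_weight (α x r : ℝ) : (|x| ^ α * r) ^ 2 = |x| ^ (2*α) * r ^ 2 := by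
  rw [mul_pow, ← Real.rpow_natCast (|x| ^ α) 2, ← Real.rpow_mul (abs_nonneg x),
    show α * ((2:ℕ):ℝ) = 2 * α by push_cast; ring]

private lemma ofReal_sq (α x r : ℝ) (hr : 0 ≤ r) :
    (ENNReal.ofReal (|x| ^ α) * ENNReal.ofReal r) ^ (2:ℝ)
      = ENNReal.ofReal (|x| ^ (2*α) * r ^ 2) := by
  rw [← ENNReal.ofReal_mul (Real.rpow_nonneg (abs_nonneg x) α),
    ENNReal.ofReal_rpow_of_nonneg (mul_nonneg (Real.rpow_nonneg (abs_nonneg x) α) hr)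
      (by norm_num : (0:ℝ) ≤ 2)]
  congr 1
  have h2 : ((|x| ^ α * r) ^ (2:ℝ)) = (|x| ^ α * r) ^ (2:ℕ) := by
    rw [← Real.rpow_natCast (|x| ^ α * r) 2]; norm_num
  rw [h2, sq_weight]

end Stmt5Aux

open scoped ENNReal in

/-- Fourier-coefficient form of the fractional product (Leibniz-type)
estimate `‖D^α(ξη)‖ ≤ C(α)(‖ξ‖_∞‖D^α η‖ + ‖η‖_∞‖D^α ξ‖)`: if `c` is the convolution of
`a` and `b`, then the weighted `ℓ²` norm of `c` with weight `|m|^{2α}` is controlled by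
`C(α)·[‖a‖_{ℓ¹}·(Σ|k|^{2α}|b_k|²)^{1/2} + ‖b‖_{ℓ¹}·(Σ|k|^{2α}|a_k|²)^{1/2}]`,
with `C(α) = max{1, 2^{α-1}}`. -/
theorem stmt5 (α : ℝ) (hα : 0 ≤ α) (a b c : ℤ → ℂ)
    (ha1 : Summable fun k => ‖a k‖) (hb1 : Summable fun k => ‖b k‖)
    (ha2 : Summable fun k : ℤ => |(k : ℝ)| ^ (2 * α) * ‖a k‖ ^ 2)
    (hb2 : Summable fun k : ℤ => |(k : ℝ)| ^ (2 * α) * ‖b k‖ ^ 2)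
    (hc : ∀ m : ℤ, HasSum (fun k => a k * b (m - k)) (c m)) :
    Summable (fun m : ℤ => |(m : ℝ)| ^ (2 * α) * ‖c m‖ ^ 2) ∧
    Real.sqrt (∑' m : ℤ, |(m : ℝ)| ^ (2 * α) * ‖c m‖ ^ 2) ≤
      max 1 ((2 : ℝ) ^ (α - 1)) *
        ((∑' k : ℤ, ‖a k‖) * Real.sqrt (∑' k : ℤ, |(k : ℝ)| ^ (2 * α) * ‖b k‖ ^ 2) +
         (∑' k : ℤ, ‖b k‖) * Real.sqrt (∑' k : ℤ, |(k : ℝ)| ^ (2 * α) * ‖a k‖ ^ 2)) := by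
  classical
  set A : ℤ → ℝ≥0∞ := fun k => ENNReal.ofReal ‖a k‖ with hA
  set B : ℤ → ℝ≥0∞ := fun k => ENNReal.ofReal ‖b k‖ with hB
  set W : ℤ → ℝ≥0∞ := fun k => ENNReal.ofReal (|(k:ℝ)| ^ α) with hW
  set WA : ℤ → ℝ≥0∞ := fun k => W k * A k with hWA
  set WB : ℤ → ℝ≥0∞ := fun k => W k * B k with hWB
  set C : ℝ≥0∞ := ENNReal.ofReal (max 1 ((2:ℝ) ^ (α - 1))) with hCdef
  -- basic nonnegativity
  have haw : ∀ k : ℤ, (0:ℝ) ≤ |(k:ℝ)| ^ (2*α) * ‖a k‖ ^ 2 := fun k =>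
    mul_nonneg (Real.rpow_nonneg (abs_nonneg _) _) (sq_nonneg _)
  have hbw : ∀ k : ℤ, (0:ℝ) ≤ |(k:ℝ)| ^ (2*α) * ‖b k‖ ^ 2 := fun k =>
    mul_nonneg (Real.rpow_nonneg (abs_nonneg _) _) (sq_nonneg _)
  have hcw : ∀ m : ℤ, (0:ℝ) ≤ |(m:ℝ)| ^ (2*α) * ‖c m‖ ^ 2 := fun m =>
    mul_nonneg (Real.rpow_nonneg (abs_nonneg _) _) (sq_nonneg _)
  -- identification of ℓ¹ sums
  have hA1 : ∑' k, A k = ENNReal.ofReal (∑' k, ‖a k‖) :=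
    (ENNReal.ofReal_tsum_of_nonneg (fun _ => norm_nonneg _) ha1).symm
  have hB1 : ∑' k, B k = ENNReal.ofReal (∑' k, ‖b k‖) :=
    (ENNReal.ofReal_tsum_of_nonneg (fun _ => norm_nonneg _) hb1).symm
  -- identification of weighted ℓ² sums
  have hWA2 : ∑' k, WA k ^ (2:ℝ) = ENNReal.ofReal (∑' k : ℤ, |(k:ℝ)| ^ (2*α) * ‖a k‖ ^ 2) := by
    rw [ENNReal.ofReal_tsum_of_nonneg haw ha2]
    exact tsum_congr fun k => by
      simp only [hWA, hW, hA]
      exact ofReal_sq α _ _ (norm_nonneg _)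
  have hWB2 : ∑' k, WB k ^ (2:ℝ) = ENNReal.ofReal (∑' k : ℤ, |(k:ℝ)| ^ (2*α) * ‖b k‖ ^ 2) := by
    rw [ENNReal.ofReal_tsum_of_nonneg hbw hb2]
    exact tsum_congr fun k => by
      simp only [hWB, hW, hB]
      exact ofReal_sq α _ _ (norm_nonneg _)
  -- convolution bound on ‖c m‖
  have hbound : ∀ j : ℤ, ‖b j‖ ≤ ∑' i, ‖b i‖ := fun j =>
    hb1.le_tsum j fun _ _ => norm_nonneg _
  have hsummul : ∀ m : ℤ, Summable fun k => ‖a k‖ * ‖b (m - k)‖ := fun m =>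
    Summable.of_nonneg_of_le (fun k => mul_nonneg (norm_nonneg _) (norm_nonneg _))
      (fun k => mul_le_mul_of_nonneg_left (hbound _) (norm_nonneg _))
      (ha1.mul_right _)
  have hcm : ∀ m : ℤ, ENNReal.ofReal ‖c m‖ ≤ ∑' k, A k * B (m - k) := by
    intro m
    have h1 : ‖c m‖ ≤ ∑' k, ‖a k‖ * ‖b (m - k)‖ := by
      rw [← (hc m).tsum_eq]
      calc ‖∑' k, a k * b (m - k)‖ ≤ ∑' k, ‖a k * b (m - k)‖ :=
            norm_tsum_le_tsum_norm ((hsummul m).congr fun k => (norm_mul _ _).symm)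
        _ = ∑' k, ‖a k‖ * ‖b (m - k)‖ := tsum_congr fun k => norm_mul _ _
    calc ENNReal.ofReal ‖c m‖ ≤ ENNReal.ofReal (∑' k, ‖a k‖ * ‖b (m - k)‖) :=
          ENNReal.ofReal_le_ofReal h1
      _ = ∑' k, ENNReal.ofReal (‖a k‖ * ‖b (m - k)‖) :=
          ENNReal.ofReal_tsum_of_nonneg (fun k => mul_nonneg (norm_nonneg _) (norm_nonneg _))
            (hsummul m)
      _ = ∑' k, A k * B (m - k) := tsum_congr fun k => ENNReal.ofReal_mul (norm_nonneg _)
  -- triangle inequality on weights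
  have hWtri : ∀ m k : ℤ, W m ≤ C * (W k + W (m - k)) := by
    intro m k
    have tri : |(m:ℝ)| ≤ |(k:ℝ)| + |((m - k : ℤ):ℝ)| := by
      have h : (m:ℝ) = (k:ℝ) + ((m - k : ℤ):ℝ) := by push_cast; ring
      rw [h]; exact abs_add_le _ _
    calc W m ≤ ENNReal.ofReal ((|(k:ℝ)| + |((m - k : ℤ):ℝ)|) ^ α) := by
          rw [hW]
          exact ENNReal.ofReal_le_ofReal (Real.rpow_le_rpow (abs_nonneg _) tri hα)
      _ ≤ C * (W k + W (m - k)) := weight_bd hα (abs_nonneg _) (abs_nonneg _)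
  -- pointwise key bound
  have hkey : ∀ m : ℤ, W m * ENNReal.ofReal ‖c m‖ ≤
      C * ((∑' k, WA k * B (m - k)) + ∑' k, A k * WB (m - k)) := by
    intro m
    calc W m * ENNReal.ofReal ‖c m‖
        ≤ W m * ∑' k, A k * B (m - k) := mul_le_mul_right (hcm m) _
      _ = ∑' k, W m * (A k * B (m - k)) := ENNReal.tsum_mul_left.symm
      _ ≤ ∑' k, (C * (W k + W (m - k))) * (A k * B (m - k)) :=
          ENNReal.tsum_le_tsum fun k => mul_le_mul_left (hWtri m k) _
      _ = ∑' k, C * (WA k * B (m - k) + A k * WB (m - k)) := by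
          refine tsum_congr fun k => ?_
          simp only [hWA, hWB]
          ring
      _ = C * ((∑' k, WA k * B (m - k)) + ∑' k, A k * WB (m - k)) := by
          rw [ENNReal.tsum_mul_left, ENNReal.tsum_add]
  -- Young for both convolutions
  have young1 : (∑' m, (∑' k, WA k * B (m - k)) ^ (2:ℝ)) ^ (1/2:ℝ) ≤
      (∑' k, B k) * (∑' k, WA k ^ (2:ℝ)) ^ (1/2:ℝ) := by
    have hc' : ∀ m : ℤ, (∑' k, WA k * B (m - k)) = ∑' k, B k * WA (m - k) := conv_comm' WA B
    calc (∑' m, (∑' k, WA k * B (m - k)) ^ (2:ℝ)) ^ (1/2:ℝ)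
        = (∑' m, (∑' k, B k * WA (m - k)) ^ (2:ℝ)) ^ (1/2:ℝ) := by
          rw [tsum_congr fun m => by rw [hc' m]]
      _ ≤ ((∑' k, B k) ^ (2:ℝ) * ∑' k, WA k ^ (2:ℝ)) ^ (1/2:ℝ) :=
          ENNReal.rpow_le_rpow (tsum_young B WA) (by norm_num)
      _ = (∑' k, B k) * (∑' k, WA k ^ (2:ℝ)) ^ (1/2:ℝ) := by
          rw [ENNReal.mul_rpow_of_nonneg _ _ (by norm_num : (0:ℝ) ≤ 1/2), ← ENNReal.rpow_mul]
          norm_num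
  have young2 : (∑' m, (∑' k, A k * WB (m - k)) ^ (2:ℝ)) ^ (1/2:ℝ) ≤
      (∑' k, A k) * (∑' k, WB k ^ (2:ℝ)) ^ (1/2:ℝ) := by
    calc (∑' m, (∑' k, A k * WB (m - k)) ^ (2:ℝ)) ^ (1/2:ℝ)
        ≤ ((∑' k, A k) ^ (2:ℝ) * ∑' k, WB k ^ (2:ℝ)) ^ (1/2:ℝ) :=
          ENNReal.rpow_le_rpow (tsum_young A WB) (by norm_num)
      _ = (∑' k, A k) * (∑' k, WB k ^ (2:ℝ)) ^ (1/2:ℝ) := by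
          rw [ENNReal.mul_rpow_of_nonneg _ _ (by norm_num : (0:ℝ) ≤ 1/2), ← ENNReal.rpow_mul]
          norm_num
  -- main chain in ℝ≥0∞
  have step1 : (∑' m, (W m * ENNReal.ofReal ‖c m‖) ^ (2:ℝ)) ^ (1/2:ℝ) ≤
      C * ((∑' k, B k) * (∑' k, WA k ^ (2:ℝ)) ^ (1/2:ℝ) +
           (∑' k, A k) * (∑' k, WB k ^ (2:ℝ)) ^ (1/2:ℝ)) := by
    calc (∑' m, (W m * ENNReal.ofReal ‖c m‖) ^ (2:ℝ)) ^ (1/2:ℝ)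
        ≤ (∑' m, (C * ((∑' k, WA k * B (m - k)) + ∑' k, A k * WB (m - k))) ^ (2:ℝ)) ^ (1/2:ℝ) :=
          ENNReal.rpow_le_rpow
            (ENNReal.tsum_le_tsum fun m => ENNReal.rpow_le_rpow (hkey m) (by norm_num))
            (by norm_num)
      _ = C * (∑' m, ((∑' k, WA k * B (m - k)) + ∑' k, A k * WB (m - k)) ^ (2:ℝ)) ^ (1/2:ℝ) := by
          rw [tsum_congr fun m =>
              ENNReal.mul_rpow_of_nonneg C _ (by norm_num : (0:ℝ) ≤ 2),
            ENNReal.tsum_mul_left,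
            ENNReal.mul_rpow_of_nonneg _ _ (by norm_num : (0:ℝ) ≤ 1/2), ← ENNReal.rpow_mul]
          norm_num
      _ ≤ C * ((∑' m, (∑' k, WA k * B (m - k)) ^ (2:ℝ)) ^ (1/2:ℝ) +
               (∑' m, (∑' k, A k * WB (m - k)) ^ (2:ℝ)) ^ (1/2:ℝ)) :=
          mul_le_mul_right (tsum_minkowski _ _) _
      _ ≤ C * ((∑' k, B k) * (∑' k, WA k ^ (2:ℝ)) ^ (1/2:ℝ) +
               (∑' k, A k) * (∑' k, WB k ^ (2:ℝ)) ^ (1/2:ℝ)) :=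
          mul_le_mul_right (add_le_add young1 young2) _
  -- the right-hand side is an `ofReal`
  have hSa0 : (0:ℝ) ≤ ∑' k : ℤ, |(k:ℝ)| ^ (2*α) * ‖a k‖ ^ 2 := tsum_nonneg haw
  have hSb0 : (0:ℝ) ≤ ∑' k : ℤ, |(k:ℝ)| ^ (2*α) * ‖b k‖ ^ 2 := tsum_nonneg hbw
  have eA : (∑' k, WA k ^ (2:ℝ)) ^ (1/2:ℝ)
      = ENNReal.ofReal (Real.sqrt (∑' k : ℤ, |(k:ℝ)| ^ (2*α) * ‖a k‖ ^ 2)) := by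
    rw [hWA2, ENNReal.ofReal_rpow_of_nonneg hSa0 (by norm_num : (0:ℝ) ≤ 1/2),
      Real.sqrt_eq_rpow]
  have eB : (∑' k, WB k ^ (2:ℝ)) ^ (1/2:ℝ)
      = ENNReal.ofReal (Real.sqrt (∑' k : ℤ, |(k:ℝ)| ^ (2*α) * ‖b k‖ ^ 2)) := by
    rw [hWB2, ENNReal.ofReal_rpow_of_nonneg hSb0 (by norm_num : (0:ℝ) ≤ 1/2),
      Real.sqrt_eq_rpow]
  have hRHS : C * ((∑' k, B k) * (∑' k, WA k ^ (2:ℝ)) ^ (1/2:ℝ) +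
           (∑' k, A k) * (∑' k, WB k ^ (2:ℝ)) ^ (1/2:ℝ))
      = ENNReal.ofReal (max 1 ((2:ℝ) ^ (α - 1)) *
          ((∑' k, ‖b k‖) * Real.sqrt (∑' k : ℤ, |(k:ℝ)| ^ (2*α) * ‖a k‖ ^ 2) +
           (∑' k, ‖a k‖) * Real.sqrt (∑' k : ℤ, |(k:ℝ)| ^ (2*α) * ‖b k‖ ^ 2))) := by
    rw [eA, eB, hA1, hB1, hCdef,
      ← ENNReal.ofReal_mul (tsum_nonneg fun _ => norm_nonneg _),
      ← ENNReal.ofReal_mul (tsum_nonneg fun _ => norm_nonneg _),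
      ← ENNReal.ofReal_add
        (mul_nonneg (tsum_nonneg fun _ => norm_nonneg _) (Real.sqrt_nonneg _))
        (mul_nonneg (tsum_nonneg fun _ => norm_nonneg _) (Real.sqrt_nonneg _)),
      ← ENNReal.ofReal_mul (le_max_of_le_left zero_le_one)]
  have hRfin : C * ((∑' k, B k) * (∑' k, WA k ^ (2:ℝ)) ^ (1/2:ℝ) +
           (∑' k, A k) * (∑' k, WB k ^ (2:ℝ)) ^ (1/2:ℝ)) ≠ ⊤ := by
    rw [hRHS]; exact ENNReal.ofReal_ne_top
  -- finiteness of the main sum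
  have hTfin : ∑' m, (W m * ENNReal.ofReal ‖c m‖) ^ (2:ℝ) ≠ ⊤ := by
    intro htop
    rw [htop, ENNReal.top_rpow_of_pos (by norm_num : (0:ℝ) < 1/2)] at step1
    exact hRfin (top_le_iff.mp step1)
  -- pointwise identification of the summand
  have hT2 : ∀ m : ℤ, (W m * ENNReal.ofReal ‖c m‖) ^ (2:ℝ)
      = ENNReal.ofReal (|(m:ℝ)| ^ (2*α) * ‖c m‖ ^ 2) := by
    intro m
    rw [hW]
    exact ofReal_sq α _ _ (norm_nonneg _)
  -- summability of the target
  have hsum : Summable (fun m : ℤ => |(m:ℝ)| ^ (2*α) * ‖c m‖ ^ 2) := by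
    refine (ENNReal.summable_toReal hTfin).congr fun m => ?_
    rw [hT2 m, ENNReal.toReal_ofReal (hcw m)]
  refine ⟨hsum, ?_⟩
  -- identify the real sum with the toReal of the ENNReal sum
  have heq : ∑' m : ℤ, |(m:ℝ)| ^ (2*α) * ‖c m‖ ^ 2
      = (∑' m, (W m * ENNReal.ofReal ‖c m‖) ^ (2:ℝ)).toReal := by
    rw [ENNReal.tsum_toReal_eq fun m => by rw [hT2 m]; exact ENNReal.ofReal_ne_top]
    exact tsum_congr fun m => by rw [hT2 m, ENNReal.toReal_ofReal (hcw m)]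
  rw [heq, Real.sqrt_eq_rpow, ENNReal.toReal_rpow]
  refine le_trans (ENNReal.toReal_mono hRfin ?_) ?_
  · exact step1
  · rw [hRHS, ENNReal.toReal_ofReal]
    · apply le_of_eq; ring
    · exact mul_nonneg (le_max_of_le_left zero_le_one)
        (add_nonneg
          (mul_nonneg (tsum_nonneg fun _ => norm_nonneg _) (Real.sqrt_nonneg _))
          (mul_nonneg (tsum_nonneg fun _ => norm_nonneg _) (Real.sqrt_nonneg _)))
end

section
/- Fix α ≥ 0, N ∈ ℕ, and real parameters κ₁, γ, κ₂. Let U : ℝ → (ℤ → ℂ) be differentiable in t with U_k(t) = 0 for |k| > N, satisfying for every m with |m| ≤ N and every t ≥ 0 the Galerkin ODE system: (1+|m|^α)·(d/dt)U_m(t) = i·m·(κ₁·U_m(t) + (3/2)γ·Σ_{k+l=m, |k|,|l|≤N} U_k(t)U_l(t)) − κ₂·(2|m|^α·Σ_{k+l=m, |k|,|l|≤N} (i·l)·U_k(t)U_l(t) + Σ_{k+l=m, |k|,|l|≤N} |l|^α·(i·l)·U_k(t)U_l(t)). Then the zeroth coefficient t ↦ U_0(t) is constant; equivalently, the mass ∫_{−π}^{π}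 u_N(x,t) dx of u_N(x,t) = Σ_{|k|≤N} U_k(t)e^{ikx} is conserved in time. -/
open Real Complex
open scoped BigOperators

/-- Mass conservation for the Fourier spectral Galerkin semi-discretization
of the fractional Camassa–Holm equation: if the coefficients `U_m(t)` (supported in `|m| ≤ N`,
differentiable in `t`) satisfy, for every `|m| ≤ N` and `t ≥ 0`,
`(1+|m|^α) U_m' = i m (κ₁ U_m + (3/2)γ Σ_{k+l=m} U_k U_l)
  - κ₂ (2|m|^α Σ_{k+l=m} (i l) U_k U_l + Σ_{k+l=m} |l|^α (i l) U_k U_l)`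
(sums over `|k|,|l| ≤ N`), then `t ↦ U_0(t)` is constant on `[0,∞)`; equivalently the mass
`∫ u_N dx = 2π U_0` of `u_N(x,t) = Σ_{|k|≤N} U_k(t) e^{ikx}` is conserved. -/
theorem stmt13 (α : ℝ) (hα : 0 ≤ α) (N : ℕ) (κ₁ γ κ₂ : ℝ)
    (U dU : ℝ → ℤ → ℂ)
    (hsupp : ∀ (t : ℝ) (k : ℤ), (N : ℤ) < |k| → U t k = 0)
    (hdiff : ∀ (k : ℤ) (t : ℝ), HasDerivAt (fun s => U s k) (dU t k) t)
    (hode : ∀ m : ℤ, |m| ≤ (N : ℤ) → ∀ t : ℝ, 0 ≤ t →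
      ((1 + |(m : ℝ)| ^ α : ℝ) : ℂ) * dU t m =
        Complex.I * (m : ℂ) * ((κ₁ : ℂ) * U t m + (3 / 2 : ℂ) * (γ : ℂ) *
            ∑ k ∈ Finset.Icc (-(N : ℤ)) (N : ℤ),
              if |m - k| ≤ (N : ℤ) then U t k * U t (m - k) else 0) -
        (κ₂ : ℂ) * (2 * ((|(m : ℝ)| ^ α : ℝ) : ℂ) *
            (∑ k ∈ Finset.Icc (-(N : ℤ)) (N : ℤ),
              if |m - k| ≤ (N : ℤ) then Complex.I * ((m - k : ℤ) : ℂ) * U t k * U t (m - k) else 0) +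
          ∑ k ∈ Finset.Icc (-(N : ℤ)) (N : ℤ),
            if |m - k| ≤ (N : ℤ) then
              ((|((m - k : ℤ) : ℝ)| ^ α : ℝ) : ℂ) * (Complex.I * ((m - k : ℤ) : ℂ)) *
                U t k * U t (m - k)
            else 0)) :
    ∀ t₁ t₂ : ℝ, 0 ≤ t₁ → 0 ≤ t₂ → U t₁ 0 = U t₂ 0 := by
  have hzero : ∀ t : ℝ, 0 ≤ t → dU t 0 = 0 := by
    intro t ht
    have h := hode 0 (by simp) t ht
    have hS1 : (∑ k ∈ Finset.Icc (-(N : ℤ)) (N : ℤ),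
        if |(0:ℤ) - k| ≤ (N : ℤ) then Complex.I * (((0:ℤ) - k : ℤ) : ℂ) * U t k * U t (0 - k) else 0) = 0 := by
      refine Finset.sum_involution (fun k _ => -k) ?_ ?_ ?_ ?_
      · intro a ha
        simp only [Finset.mem_Icc] at ha
        simp only [zero_sub, abs_neg, neg_neg, Int.cast_neg]
        have h2 : |a| ≤ (N:ℤ) := abs_le.mpr ⟨by omega, by omega⟩
        rw [if_pos h2, if_pos h2]
        ring
      · intro a ha hne hcon
        replace hcon : -a = a := hcon
        have : a = 0 := by omega
        subst this
        simp at hne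
      · intro a ha
        simp only [Finset.mem_Icc] at ha ⊢
        omega
      · intro a ha; simp
    have hS2 : (∑ k ∈ Finset.Icc (-(N : ℤ)) (N : ℤ),
        if |(0:ℤ) - k| ≤ (N : ℤ) then
          ((|(((0:ℤ) - k : ℤ) : ℝ)| ^ α : ℝ) : ℂ) * (Complex.I * (((0:ℤ) - k : ℤ) : ℂ)) *
            U t k * U t (0 - k) else 0) = 0 := by
      refine Finset.sum_involution (fun k _ => -k) ?_ ?_ ?_ ?_
      · intro a ha
        simp only [Finset.mem_Icc] at ha
        simp only [zero_sub, abs_neg, neg_neg, Int.cast_neg]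
        have h2 : |a| ≤ (N:ℤ) := abs_le.mpr ⟨by omega, by omega⟩
        rw [if_pos h2, if_pos h2]
        ring
      · intro a ha hne hcon
        replace hcon : -a = a := hcon
        have : a = 0 := by omega
        subst this
        simp at hne
      · intro a ha
        simp only [Finset.mem_Icc] at ha ⊢
        omega
      · intro a ha; simp
    rw [hS1, hS2] at h
    simp only [Int.cast_zero, mul_zero, zero_mul, add_zero, sub_zero, sub_self] at h
    rcases mul_eq_zero.mp h with h' | h'
    · exact absurd h' (Complex.ofReal_ne_zero.mpr (by positivity))
    · exact h'
  intro t₁ t₂ ht₁ ht₂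
  have hconv : Convex ℝ (Set.Ici (0:ℝ)) := convex_Ici 0
  have hdiffOn : DifferentiableOn ℝ (fun s => U s 0) (Set.Ici (0:ℝ)) :=
    fun x _ => ((hdiff 0 x).differentiableAt).differentiableWithinAt
  have hfd : ∀ x ∈ Set.Ici (0:ℝ), fderivWithin ℝ (fun s => U s 0) (Set.Ici (0:ℝ)) x = 0 := by
    intro x hx
    have h0 : HasDerivAt (fun s => U s 0) 0 x := hzero x hx ▸ hdiff 0 x
    have h1 : HasFDerivWithinAt (fun s => U s 0)
        (ContinuousLinearMap.smulRight (1 : ℝ →L[ℝ] ℝ) (0:ℂ)) (Set.Ici (0:ℝ)) x :=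
      h0.hasFDerivAt.hasFDerivWithinAt
    rw [h1.fderivWithin (uniqueDiffOn_Ici 0 x hx)]
    ext z
    simp
  exact hconv.is_const_of_fderivWithin_eq_zero hdiffOn hfd ht₁ ht₂
end

section
/- Fix α ≥ 0, N ∈ ℕ, and real parameters κ₁, γ, κ₂. Let U : ℝ → (ℤ → ℂ) be differentiable in t with U_k(t) = 0 for |k| > N, satisfying the reality condition U_{−k}(t) = conj(U_k(t)) for all k and t, and satisfying for every m with |m| ≤ N and every t ≥ 0 the Galerkin ODE system: (1+|m|^α)·(d/dt)U_m(t) = i·m·(κ₁·U_m(t) + (3/2)γ·Σ_{k+l=m, |k|,|l|≤N} U_k(t)U_l(t)) − κ₂·(2|m|^α·Σ_{k+l=m, |k|,|l|≤N} (i·l)·U_k(t)U_l(t) + Σ_{k+l=m, |k|,|l|≤N} |l|^α·(i·l)·U_k(t)U_l(t)). Then the discrete energy t ↦ Σ_{m=−N}^{N} (1+|m|^α)·|U_m(t)|² is constant in time; equivalently, ∫_{−π}^{π}(u_N² + |D^{α/2}u_N|²) dx is conserved, where u_N(x,t) = Σ_{|k|≤N} U_k(t)e^{ikx}. -/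
open Real Complex
open scoped BigOperators

/-- Energy conservation for the Fourier spectral Galerkin
semi-discretization of the fractional Camassa–Holm equation: under the same Galerkin
ODE system as in mass conservation, together with the reality condition
`U_{-k} = conj U_k`, the discrete energy `Σ_{m=-N}^{N} (1+|m|^α)|U_m(t)|²` is constant in
time on `[0,∞)`; equivalently `∫ (u_N² + |D^{α/2}u_N|²) dx = 2π Σ_m (1+|m|^α)|U_m|²`
is conserved. -/
theorem stmt14 (α : ℝ) (hα : 0 ≤ α) (N : ℕ) (κ₁ γ κ₂ : ℝ)
    (U dU : ℝ → ℤ → ℂ)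
    (hsupp : ∀ (t : ℝ) (k : ℤ), (N : ℤ) < |k| → U t k = 0)
    (hreal : ∀ (t : ℝ) (k : ℤ), U t (-k) = starRingEnd ℂ (U t k))
    (hdiff : ∀ (k : ℤ) (t : ℝ), HasDerivAt (fun s => U s k) (dU t k) t)
    (hode : ∀ m : ℤ, |m| ≤ (N : ℤ) → ∀ t : ℝ, 0 ≤ t →
      ((1 + |(m : ℝ)| ^ α : ℝ) : ℂ) * dU t m =
        Complex.I * (m : ℂ) * ((κ₁ : ℂ) * U t m + (3 / 2 : ℂ) * (γ : ℂ) *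
            ∑ k ∈ Finset.Icc (-(N : ℤ)) (N : ℤ),
              if |m - k| ≤ (N : ℤ) then U t k * U t (m - k) else 0) -
        (κ₂ : ℂ) * (2 * ((|(m : ℝ)| ^ α : ℝ) : ℂ) *
            (∑ k ∈ Finset.Icc (-(N : ℤ)) (N : ℤ),
              if |m - k| ≤ (N : ℤ) then Complex.I * ((m - k : ℤ) : ℂ) * U t k * U t (m - k) else 0) +
          ∑ k ∈ Finset.Icc (-(N : ℤ)) (N : ℤ),
            if |m - k| ≤ (N : ℤ) then
              ((|((m - k : ℤ) : ℝ)| ^ α : ℝ) : ℂ) * (Complex.I * ((m - k : ℤ) : ℂ)) *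
                U t k * U t (m - k)
            else 0)) :
    ∀ t₁ t₂ : ℝ, 0 ≤ t₁ → 0 ≤ t₂ →
      (∑ m ∈ Finset.Icc (-(N : ℤ)) (N : ℤ), (1 + |(m : ℝ)| ^ α) * ‖U t₁ m‖ ^ 2) =
        ∑ m ∈ Finset.Icc (-(N : ℤ)) (N : ℤ), (1 + |(m : ℝ)| ^ α) * ‖U t₂ m‖ ^ 2 := by
  intro t₁ t₂ ht₁ ht₂
  set S : Finset ℤ := Finset.Icc (-(N : ℤ)) (N : ℤ) with hSdef
  set W : Finset (ℤ × ℤ) := (S ×ˢ S).filter (fun p => |p.1 - p.2| ≤ (N : ℤ)) with hWdef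
  have memS : ∀ m : ℤ, m ∈ S ↔ |m| ≤ (N : ℤ) := by
    intro m; rw [hSdef, Finset.mem_Icc, abs_le]
  have memW : ∀ p : ℤ × ℤ,
      p ∈ W ↔ |p.1| ≤ (N : ℤ) ∧ |p.2| ≤ (N : ℤ) ∧ |p.1 - p.2| ≤ (N : ℤ) := by
    intro p
    rw [hWdef, Finset.mem_filter, Finset.mem_product, memS, memS, and_assoc]
  -- 1d reflection
  have h1d : ∀ g : ℤ → ℂ, ∑ m ∈ S, g m = ∑ m ∈ S, g (-m) := by
    intro g
    refine Finset.sum_nbij' (i := fun m => -m) (j := fun m => -m) ?_ ?_ ?_ ?_ ?_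
    · intro a ha; simp only [memS, abs_le] at *; omega
    · intro a ha; simp only [memS, abs_le] at *; omega
    · intro a _; exact neg_neg a
    · intro a _; exact neg_neg a
    · intro a _; rw [neg_neg]
  -- 3-cycle on W
  have hcyc : ∀ f : ℤ × ℤ → ℂ, ∑ p ∈ W, f p = ∑ p ∈ W, f (-p.2, p.1 - p.2) := by
    intro f
    refine Finset.sum_nbij' (i := fun p => (p.2 - p.1, -p.1)) (j := fun p => (-p.2, p.1 - p.2))
      ?_ ?_ ?_ ?_ ?_
    · intro p hp; obtain ⟨a, b⟩ := p; simp only [memW, abs_le] at *; omega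
    · intro p hp; obtain ⟨a, b⟩ := p; simp only [memW, abs_le] at *; omega
    · intro p _; obtain ⟨a, b⟩ := p; simp only [Prod.mk.injEq]; constructor <;> ring
    · intro p _; obtain ⟨a, b⟩ := p; simp only [Prod.mk.injEq]; constructor <;> ring
    · intro p _
      obtain ⟨a, b⟩ := p
      simp only
      have e1 : -(-a) = a := by ring
      have e2 : b - a - -a = b := by ring
      rw [e1, e2]
  -- swap on W
  have hswap : ∀ f : ℤ × ℤ → ℂ, ∑ p ∈ W, f p = ∑ p ∈ W, f (p.1, p.1 - p.2) := by
    intro f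
    refine Finset.sum_nbij' (i := fun p => (p.1, p.1 - p.2)) (j := fun p => (p.1, p.1 - p.2))
      ?_ ?_ ?_ ?_ ?_
    · intro p hp; obtain ⟨a, b⟩ := p; simp only [memW, abs_le] at *; omega
    · intro p hp; obtain ⟨a, b⟩ := p; simp only [memW, abs_le] at *; omega
    · intro p _; obtain ⟨a, b⟩ := p; simp only [Prod.mk.injEq, true_and]; ring
    · intro p _; obtain ⟨a, b⟩ := p; simp only [Prod.mk.injEq, true_and]; ring
    · intro p _
      obtain ⟨a, b⟩ := p
      simp only
      have e1 : a - (a - b) = b := by ring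
      rw [e1]
  -- double sums to W sums
  have hdouble : ∀ F : ℤ → ℤ → ℂ,
      (∑ m ∈ S, ∑ k ∈ S, if |m - k| ≤ (N : ℤ) then F m k else 0) = ∑ p ∈ W, F p.1 p.2 := by
    intro F
    rw [hWdef, Finset.sum_filter, ← Finset.sum_product']
  -- the key vanishing of the complex energy production term
  have key : ∀ t : ℝ, 0 ≤ t →
      (∑ m ∈ S, U t (-m) * (((1 + |(m : ℝ)| ^ α : ℝ) : ℂ) * dU t m)) = 0 := by
    intro t ht
    have expand : ∀ m ∈ S, U t (-m) * (((1 + |(m : ℝ)| ^ α : ℝ) : ℂ) * dU t m) =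
        (κ₁ : ℂ) * (Complex.I * (m : ℂ) * U t (-m) * U t m)
        + ((3 / 2 : ℂ) * (γ : ℂ)) * (Complex.I * (m : ℂ) * U t (-m) *
            (∑ k ∈ S, if |m - k| ≤ (N : ℤ) then U t k * U t (m - k) else 0))
        - (κ₂ : ℂ) * (2 * (((|(m : ℝ)| ^ α : ℝ) : ℂ) * U t (-m) *
              (∑ k ∈ S, if |m - k| ≤ (N : ℤ) then
                Complex.I * ((m - k : ℤ) : ℂ) * U t k * U t (m - k) else 0))
           + U t (-m) * (∑ k ∈ S, if |m - k| ≤ (N : ℤ) then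
                ((|((m - k : ℤ) : ℝ)| ^ α : ℝ) : ℂ) * (Complex.I * ((m - k : ℤ) : ℂ)) *
                  U t k * U t (m - k) else 0)) := by
      intro m hm
      rw [hode m ((memS m).mp hm) t ht]
      ring
    rw [Finset.sum_congr rfl expand]
    simp only [Finset.sum_sub_distrib, Finset.sum_add_distrib, ← Finset.mul_sum]
    -- the quadratic term
    have hA : (∑ m ∈ S, Complex.I * (m : ℂ) * U t (-m) * U t m) = 0 := by
      have h2 : (∑ m ∈ S, Complex.I * (m : ℂ) * U t (-m) * U t m)
          = ∑ m ∈ S, Complex.I * ((-m : ℤ) : ℂ) * U t (- -m) * U t (-m) :=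
        h1d (fun m => Complex.I * (m : ℂ) * U t (-m) * U t m)
      have h3 : ∀ m ∈ S, Complex.I * ((-m : ℤ) : ℂ) * U t (- -m) * U t (-m)
          = -(Complex.I * (m : ℂ) * U t (-m) * U t m) := by
        intro m _; rw [neg_neg]; push_cast; ring
      rw [Finset.sum_congr rfl h3, Finset.sum_neg_distrib] at h2
      have h4 : (2 : ℂ) * (∑ m ∈ S, Complex.I * (m : ℂ) * U t (-m) * U t m) = 0 := by
        linear_combination h2
      exact (mul_eq_zero.mp h4).resolve_left two_ne_zero
    -- the cubic κ₁-free term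
    have hB : (∑ m ∈ S, Complex.I * (m : ℂ) * U t (-m) *
        (∑ k ∈ S, if |m - k| ≤ (N : ℤ) then U t k * U t (m - k) else 0)) = 0 := by
      have hpush : ∀ m ∈ S, Complex.I * (m : ℂ) * U t (-m) *
          (∑ k ∈ S, if |m - k| ≤ (N : ℤ) then U t k * U t (m - k) else 0)
          = ∑ k ∈ S, if |m - k| ≤ (N : ℤ) then
              Complex.I * (m : ℂ) * U t (-m) * (U t k * U t (m - k)) else 0 := by
        intro m _
        rw [Finset.mul_sum]
        refine Finset.sum_congr rfl fun k _ => ?_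
        split <;> simp
      rw [Finset.sum_congr rfl hpush,
        hdouble (fun m k => Complex.I * (m : ℂ) * U t (-m) * (U t k * U t (m - k)))]
      set f : ℤ × ℤ → ℂ :=
        fun p => Complex.I * (p.1 : ℂ) * U t (-p.1) * (U t p.2 * U t (p.1 - p.2)) with hf
      have h1 : ∑ p ∈ W, f p = ∑ p ∈ W, f (-p.2, p.1 - p.2) := hcyc f
      have h2 : ∑ p ∈ W, f (-p.2, p.1 - p.2)
          = ∑ p ∈ W, f (-(p.1 - p.2), -p.2 - (p.1 - p.2)) := by
        have := hcyc (fun p => f (-p.2, p.1 - p.2))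
        simpa using this
      have h3 : ∑ p ∈ W,
          (f p + f (-p.2, p.1 - p.2) + f (-(p.1 - p.2), -p.2 - (p.1 - p.2))) = 0 := by
        refine Finset.sum_eq_zero fun p _ => ?_
        obtain ⟨a, b⟩ := p
        simp only [hf]
        have e1 : -b - (a - b) = -a := by ring
        rw [e1]
        have e2 : -(a - b) - -a = b := by ring
        rw [e2]
        simp only [neg_neg]
        push_cast
        ring
      rw [Finset.sum_add_distrib, Finset.sum_add_distrib] at h3
      linear_combination (2 / 3 : ℂ) * h1 + (1 / 3 : ℂ) * h2 + (1 / 3 : ℂ) * h3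
    -- the two κ₂ cubic terms cancel
    have hC : (2 : ℂ) * (∑ m ∈ S, ((|(m : ℝ)| ^ α : ℝ) : ℂ) * U t (-m) *
          (∑ k ∈ S, if |m - k| ≤ (N : ℤ) then
            Complex.I * ((m - k : ℤ) : ℂ) * U t k * U t (m - k) else 0))
        + (∑ m ∈ S, U t (-m) * (∑ k ∈ S, if |m - k| ≤ (N : ℤ) then
            ((|((m - k : ℤ) : ℝ)| ^ α : ℝ) : ℂ) * (Complex.I * ((m - k : ℤ) : ℂ)) *
              U t k * U t (m - k) else 0)) = 0 := by
      have hpushC : ∀ m ∈ S, ((|(m : ℝ)| ^ α : ℝ) : ℂ) * U t (-m) *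
          (∑ k ∈ S, if |m - k| ≤ (N : ℤ) then
            Complex.I * ((m - k : ℤ) : ℂ) * U t k * U t (m - k) else 0)
          = ∑ k ∈ S, if |m - k| ≤ (N : ℤ) then
              ((|(m : ℝ)| ^ α : ℝ) : ℂ) * U t (-m) *
                (Complex.I * ((m - k : ℤ) : ℂ) * U t k * U t (m - k)) else 0 := by
        intro m _
        rw [Finset.mul_sum]
        refine Finset.sum_congr rfl fun k _ => ?_
        split <;> simp
      have hpushD : ∀ m ∈ S, U t (-m) * (∑ k ∈ S, if |m - k| ≤ (N : ℤ) then
            ((|((m - k : ℤ) : ℝ)| ^ α : ℝ) : ℂ) * (Complex.I * ((m - k : ℤ) : ℂ)) *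
              U t k * U t (m - k) else 0)
          = ∑ k ∈ S, if |m - k| ≤ (N : ℤ) then
              U t (-m) * (((|((m - k : ℤ) : ℝ)| ^ α : ℝ) : ℂ) *
                (Complex.I * ((m - k : ℤ) : ℂ)) * U t k * U t (m - k)) else 0 := by
        intro m _
        rw [Finset.mul_sum]
        refine Finset.sum_congr rfl fun k _ => ?_
        split <;> simp
      rw [Finset.sum_congr rfl hpushC, Finset.sum_congr rfl hpushD,
        hdouble (fun m k => ((|(m : ℝ)| ^ α : ℝ) : ℂ) * U t (-m) *
          (Complex.I * ((m - k : ℤ) : ℂ) * U t k * U t (m - k))),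
        hdouble (fun m k => U t (-m) * (((|((m - k : ℤ) : ℝ)| ^ α : ℝ) : ℂ) *
          (Complex.I * ((m - k : ℤ) : ℂ)) * U t k * U t (m - k)))]
      set Fc : ℤ × ℤ → ℂ := fun p => ((|(p.1 : ℝ)| ^ α : ℝ) : ℂ) * U t (-p.1) *
        (Complex.I * ((p.1 - p.2 : ℤ) : ℂ) * U t p.2 * U t (p.1 - p.2)) with hFc
      set Fd : ℤ × ℤ → ℂ := fun p => U t (-p.1) *
        (((|((p.1 - p.2 : ℤ) : ℝ)| ^ α : ℝ) : ℂ) *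
          (Complex.I * ((p.1 - p.2 : ℤ) : ℂ)) * U t p.2 * U t (p.1 - p.2)) with hFd
      have h1 : ∑ p ∈ W, Fc p = ∑ p ∈ W, Fc (p.1, p.1 - p.2) := hswap Fc
      have h2 : ∑ p ∈ W, Fd p = ∑ p ∈ W, Fd (-p.2, p.1 - p.2) := hcyc Fd
      have h3 : ∑ p ∈ W, (Fc p + Fc (p.1, p.1 - p.2) + Fd (-p.2, p.1 - p.2)) = 0 := by
        refine Finset.sum_eq_zero fun p _ => ?_
        obtain ⟨a, b⟩ := p
        simp only [hFc, hFd]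
        have e1 : a - (a - b) = b := by ring
        rw [e1]
        have e2 : -b - (a - b) = -a := by ring
        rw [e2]
        simp only [neg_neg]
        push_cast
        rw [abs_neg]
        ring
      rw [Finset.sum_add_distrib, Finset.sum_add_distrib] at h3
      linear_combination h1 + h2 + h3
    linear_combination (κ₁ : ℂ) * hA + ((3 / 2 : ℂ) * (γ : ℂ)) * hB - (κ₂ : ℂ) * hC
  -- derivative of the energy
  have hEderiv : ∀ t : ℝ, HasDerivAt
      (fun s => ∑ m ∈ S, (1 + |(m : ℝ)| ^ α) * ‖U s m‖ ^ 2)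
      (∑ m ∈ S, (1 + |(m : ℝ)| ^ α) * (2 * ((starRingEnd ℂ) (U t m) * dU t m).re)) t := by
    intro t
    apply HasDerivAt.fun_sum
    intro m _
    have hre : HasDerivAt (fun s => (U s m).re) ((dU t m).re) t := by
      have := Complex.reCLM.hasFDerivAt.comp_hasDerivAt t (hdiff m t)
      exact this
    have him : HasDerivAt (fun s => (U s m).im) ((dU t m).im) t := by
      have := Complex.imCLM.hasFDerivAt.comp_hasDerivAt t (hdiff m t)
      exact this
    have hsq : HasDerivAt
        (fun s => (U s m).re * (U s m).re + (U s m).im * (U s m).im)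
        ((dU t m).re * (U t m).re + (U t m).re * (dU t m).re +
          ((dU t m).im * (U t m).im + (U t m).im * (dU t m).im)) t :=
      (hre.mul hre).add (him.mul him)
    have heq : (fun s => (1 + |(m : ℝ)| ^ α) * ‖U s m‖ ^ 2)
        = fun s => (1 + |(m : ℝ)| ^ α) *
            ((U s m).re * (U s m).re + (U s m).im * (U s m).im) := by
      funext s
      rw [Complex.sq_norm, Complex.normSq_apply]
    rw [heq]
    convert hsq.const_mul (1 + |(m : ℝ)| ^ α) using 1
    · rfl
    simp only [Complex.mul_re, Complex.conj_re, Complex.conj_im]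
    ring
  -- the derivative vanishes on [0, ∞)
  have hDzero : ∀ t : ℝ, 0 ≤ t →
      (∑ m ∈ S, (1 + |(m : ℝ)| ^ α) * (2 * ((starRingEnd ℂ) (U t m) * dU t m).re)) = 0 := by
    intro t ht
    have hterm : ∀ m ∈ S, (1 + |(m : ℝ)| ^ α) * (2 * ((starRingEnd ℂ) (U t m) * dU t m).re)
        = 2 * (U t (-m) * (((1 + |(m : ℝ)| ^ α : ℝ) : ℂ) * dU t m)).re := by
      intro m _
      rw [hreal t m]
      have h5 : (starRingEnd ℂ) (U t m) * (((1 + |(m : ℝ)| ^ α : ℝ) : ℂ) * dU t m)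
          = ((1 + |(m : ℝ)| ^ α : ℝ) : ℂ) * ((starRingEnd ℂ) (U t m) * dU t m) := by ring
      rw [h5, Complex.re_ofReal_mul]
      ring
    rw [Finset.sum_congr rfl hterm, ← Finset.mul_sum, ← Complex.re_sum, key t ht]
    simp
  -- conclude by the mean value theorem
  suffices h : ∀ a b : ℝ, 0 ≤ a → a < b →
      (∑ m ∈ S, (1 + |(m : ℝ)| ^ α) * ‖U a m‖ ^ 2)
        = ∑ m ∈ S, (1 + |(m : ℝ)| ^ α) * ‖U b m‖ ^ 2 by
    rcases lt_trichotomy t₁ t₂ with h' | h' | h'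
    · exact h t₁ t₂ ht₁ h'
    · rw [h']
    · exact (h t₂ t₁ ht₂ h').symm
  intro a b ha hab
  obtain ⟨c, hc, hc'⟩ := exists_hasDerivAt_eq_slope
    (fun s => ∑ m ∈ S, (1 + |(m : ℝ)| ^ α) * ‖U s m‖ ^ 2)
    (fun t => ∑ m ∈ S, (1 + |(m : ℝ)| ^ α) * (2 * ((starRingEnd ℂ) (U t m) * dU t m).re))
    hab
    (fun x _ => (hEderiv x).continuousAt.continuousWithinAt)
    (fun x _ => hEderiv x)
  rw [hDzero c (le_of_lt (lt_of_le_of_lt ha hc.1))] at hc'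
  have hne : b - a ≠ 0 := sub_ne_zero.mpr hab.ne'
  have h6 := (div_eq_zero_iff.mp hc'.symm).resolve_right hne
  have h7 := sub_eq_zero.mp h6
  linarith [h7]
end

section
/- Let α ∈ [1,2]. For every B > 0 there exist T̄ > 0 and C > 0, depending only on B and α (and in particular independent of N), with the following property. Let N ∈ ℕ and let U : [0, T̄] → (ℤ → ℂ) be differentiable with U_k(t) = 0 for |k| > N, satisfying the reality condition U_{−k}(t) = conj(U_k(t)), satisfying for every |m| ≤ N the fractional BBM Galerkin ODE system (1+|m|^α)·(d/dt)U_m(t) = i·m·(U_m(t) + (1/2)·Σ_{k+l=m, |k|,|l|≤N} U_k(t)U_l(t)), and whose initial data satisfies Σ_{|k|≤N} (1+|k|²)^α·|U_k(0)|² ≤ B. Then for all t ∈ [0, T̄]: Σ_{|k|≤N} (1+|k|²)^α·|U_k(t)|² ≤ C and Σ_{|k|≤N} (1+|k|²)^α·|(d/dt)U_k(t)|² ≤ C. -/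
open Real Complex
open scoped BigOperators


namespace Stmt17Aux

/-- Sum over a superset of the support is independent of the set. -/
lemma sum_eq_support {h : ℤ → ℝ} {P s u : Finset ℤ} (hs : P ⊆ s) (hu : P ⊆ u)
    (h0 : ∀ j ∉ P, h j = 0) : ∑ j ∈ s, h j = ∑ j ∈ u, h j := by
  rw [← Finset.sum_subset hs (fun x _ hx => h0 x hx),
      ← Finset.sum_subset hu (fun x _ hx => h0 x hx)]

lemma sum_le_support {h : ℤ → ℝ} {P : Finset ℤ} (u : Finset ℤ)
    (hnn : ∀ j, 0 ≤ h j) (h0 : ∀ j ∉ P, h j = 0) : ∑ j ∈ u, h j ≤ ∑ j ∈ P, h j := by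
  have h1 : ∑ j ∈ u, h j = ∑ j ∈ u ∩ P, h j := by
    refine (Finset.sum_subset (Finset.inter_subset_left) ?_).symm
    intro x hx hx'
    exact h0 x (fun hP => hx' (Finset.mem_inter.2 ⟨hx, hP⟩))
  rw [h1]
  exact Finset.sum_le_sum_of_subset_of_nonneg Finset.inter_subset_right
    (fun j _ _ => hnn j)

/-- Shifted sum bound. -/
lemma sum_shift_le {h : ℤ → ℝ} {P : Finset ℤ} (s : Finset ℤ) (k : ℤ)
    (hnn : ∀ j, 0 ≤ h j) (h0 : ∀ j ∉ P, h j = 0) :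
    ∑ m ∈ s, h (m - k) ≤ ∑ j ∈ P, h j := by
  have : ∑ m ∈ s, h (m - k) = ∑ j ∈ s.image (· - k), h j := by
    rw [Finset.sum_image (by intro x _ y _ hxy; have hxy' : x - k = y - k := hxy; omega)]
  rw [this]
  exact sum_le_support _ hnn h0

/-- Peetre-type inequality. -/
lemma peetre {α : ℝ} (hα1 : 1 ≤ α) (hα2 : α ≤ 2) (x y : ℝ) :
    (1 + (x + y) ^ 2) ^ (α / 2) ≤ 4 * ((1 + x ^ 2) ^ (α / 2) + (1 + y ^ 2) ^ (α / 2)) := by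
  have hX : (0:ℝ) < 1 + x ^ 2 := by positivity
  have hY : (0:ℝ) < 1 + y ^ 2 := by positivity
  have hmax : 1 + (x + y) ^ 2 ≤ 4 * max (1 + x ^ 2) (1 + y ^ 2) := by
    rcases le_total (1 + x ^ 2) (1 + y ^ 2) with h | h
    · rw [max_eq_right h]; nlinarith [sq_nonneg (x - y), sq_nonneg (x + y)]
    · rw [max_eq_left h]; nlinarith [sq_nonneg (x - y), sq_nonneg (x + y)]
  have he : (0:ℝ) ≤ α / 2 := by linarith
  calc (1 + (x + y) ^ 2) ^ (α / 2)
      ≤ (4 * max (1 + x ^ 2) (1 + y ^ 2)) ^ (α / 2) :=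
        Real.rpow_le_rpow (by positivity) hmax he
    _ = (4:ℝ) ^ (α / 2) * (max (1 + x ^ 2) (1 + y ^ 2)) ^ (α / 2) :=
        Real.mul_rpow (by norm_num) (le_max_of_le_left hX.le)
    _ ≤ 4 * ((1 + x ^ 2) ^ (α / 2) + (1 + y ^ 2) ^ (α / 2)) := by
        have h4 : (4:ℝ) ^ (α / 2) ≤ 4 := by
          calc (4:ℝ) ^ (α/2) ≤ (4:ℝ) ^ (1:ℝ) :=
            Real.rpow_le_rpow_of_exponent_le (by norm_num) (by linarith)
          _ = 4 := Real.rpow_one 4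
        have hm : (max (1 + x ^ 2) (1 + y ^ 2)) ^ (α / 2)
            ≤ (1 + x ^ 2) ^ (α / 2) + (1 + y ^ 2) ^ (α / 2) := by
          rcases le_total (1 + x ^ 2) (1 + y ^ 2) with h | h
          · rw [max_eq_right h]
            have := Real.rpow_nonneg hX.le (α/2); linarith
          · rw [max_eq_left h]
            have := Real.rpow_nonneg hY.le (α/2); linarith
        have h1 : (0:ℝ) ≤ (max (1 + x ^ 2) (1 + y ^ 2)) ^ (α / 2) :=
          Real.rpow_nonneg (le_max_of_le_left hX.le) _
        nlinarith [Real.rpow_nonneg hX.le (α/2), Real.rpow_nonneg hY.le (α/2)]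

lemma sq_rpow {x : ℝ} (hx : 0 < x) (e : ℝ) : (x ^ e) ^ 2 = x ^ (e * 2) := by
  rw [← Real.rpow_natCast (x ^ e) 2, ← Real.rpow_mul hx.le]
  norm_num

/-- Basel-type uniform bound. -/
lemma basel (N : ℕ) :
    ∑ k ∈ Finset.Icc (-(N:ℤ)) (N:ℤ), 1 / (1 + (k:ℝ) ^ 2) ≤ 5 := by
  have key : ∀ n : ℕ, ∑ k ∈ Finset.Icc (-(n:ℤ)) (n:ℤ), 1 / (1 + (k:ℝ) ^ 2)
      ≤ 5 - 4 / ((n:ℝ) + 1) := by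
    intro n
    induction n with
    | zero => simp; norm_num
    | succ n ih =>
      have hset : Finset.Icc (-(n+1:ℕ):ℤ) ((n+1:ℕ):ℤ) =
          insert (-(n+1:ℕ):ℤ) (insert ((n+1:ℕ):ℤ) (Finset.Icc (-(n:ℕ):ℤ) ((n:ℕ):ℤ))) := by
        ext x; simp [Finset.mem_Icc]; omega
      rw [hset, Finset.sum_insert (by simp only [Finset.mem_insert, Finset.mem_Icc]; omega),
          Finset.sum_insert (by simp only [Finset.mem_Icc]; omega)]
      push_cast
      have hn : (0:ℝ) < (n:ℝ) + 1 := by positivity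
      have hn2 : (0:ℝ) < (n:ℝ) + 2 := by positivity
      have h1 : 1 / (1 + (-((n:ℝ)+1)) ^ 2) = 1 / (1 + ((n:ℝ)+1) ^ 2) := by ring_nf
      rw [h1]
      have h2 : 2 * (1 / (1 + ((n:ℝ)+1) ^ 2)) ≤ 4 / ((n:ℝ)+1) - 4 / ((n:ℝ)+1+1) := by
        have h0 : (0:ℝ) < 1 + ((n:ℝ)+1)^2 := by positivity
        rw [mul_one_div, div_sub_div _ _ (ne_of_gt hn) (by positivity : ((n:ℝ)+1+1) ≠ 0),
          div_le_div_iff₀ h0 (by positivity)]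
        nlinarith [sq_nonneg ((n:ℝ))]
      have := ih
      linarith
  calc ∑ k ∈ Finset.Icc (-(N:ℤ)) (N:ℤ), 1 / (1 + (k:ℝ) ^ 2) ≤ 5 - 4/((N:ℝ)+1) := key N
    _ ≤ 5 := by
        have : (0:ℝ) < (N:ℝ)+1 := by positivity
        have : (0:ℝ) ≤ 4/((N:ℝ)+1) := by positivity
        linarith


/-- Swap the roles in a convolution sum (using supports). -/
lemma conv_swap {a b : ℤ → ℝ} {N : ℤ} (ha0 : ∀ j ∉ Finset.Icc (-N) N, a j = 0)
    (hb0 : ∀ j ∉ Finset.Icc (-N) N, b j = 0) {m : ℤ} (hm : m ∈ Finset.Icc (-N) N) :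
    ∑ k ∈ Finset.Icc (-N) N, b k * a (m - k)
      = ∑ j ∈ Finset.Icc (-(3*N)) (3*N), a j * b (m - j) := by
  have hm' := Finset.mem_Icc.1 hm
  have step1 : ∑ k ∈ Finset.Icc (-N) N, b k * a (m - k)
      = ∑ k ∈ Finset.Icc (-(2*N)) (2*N), b k * a (m - k) := by
    refine sum_eq_support (le_refl _) ?_ ?_
    · intro x hx; have := Finset.mem_Icc.1 hx; simp [Finset.mem_Icc]; omega
    · intro j hj; rw [hb0 j hj, zero_mul]
  have step2 : ∑ j ∈ (Finset.Icc (-(2*N)) (2*N)).image (fun k => m - k), a j * b (m - j)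
      = ∑ k ∈ Finset.Icc (-(2*N)) (2*N), b k * a (m - k) := by
    rw [Finset.sum_image (by intro x _ y _ h; have h' : m - x = m - y := h; omega)]
    refine Finset.sum_congr rfl (fun k _ => ?_)
    simp only [sub_sub_cancel]; ring
  have step3 : ∑ j ∈ (Finset.Icc (-(2*N)) (2*N)).image (fun k => m - k), a j * b (m - j)
      = ∑ j ∈ Finset.Icc (-(3*N)) (3*N), a j * b (m - j) := by
    refine sum_eq_support (P := Finset.Icc (-N) N) ?_ ?_ ?_
    · intro j hj
      have hj' := Finset.mem_Icc.1 hj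
      refine Finset.mem_image.2 ⟨m - j, ?_, by omega⟩
      simp [Finset.mem_Icc]; omega
    · intro j hj; have := Finset.mem_Icc.1 hj; simp [Finset.mem_Icc]; omega
    · intro j hj; rw [ha0 j hj, zero_mul]
  rw [step1, ← step2, step3]

/-- Cauchy–Schwarz bound for a shifted pairing. -/
lemma inner_shift_le {b : ℤ → ℝ} {P : Finset ℤ} (hnn : ∀ j, 0 ≤ b j)
    (hb0 : ∀ j ∉ P, b j = 0) (s : Finset ℤ) (k : ℤ) :
    ∑ m ∈ s, b m * b (m - k) ≤ ∑ j ∈ P, b j ^ 2 := by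
  have hE : (0:ℝ) ≤ ∑ j ∈ P, b j ^ 2 := Finset.sum_nonneg fun j _ => sq_nonneg _
  have hcs := Finset.sum_mul_sq_le_sq_mul_sq s (fun m => b m) (fun m => b (m - k))
  have h2 : ∑ m ∈ s, b m ^ 2 ≤ ∑ j ∈ P, b j ^ 2 :=
    sum_le_support s (fun j => sq_nonneg _) (fun j hj => by rw [hb0 j hj]; ring)
  have h3 : ∑ m ∈ s, b (m - k) ^ 2 ≤ ∑ j ∈ P, b j ^ 2 :=
    sum_shift_le s k (fun j => sq_nonneg _) (fun j hj => by rw [hb0 j hj]; ring)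
  have hx : (0:ℝ) ≤ ∑ m ∈ s, b m * b (m - k) :=
    Finset.sum_nonneg fun m _ => mul_nonneg (hnn m) (hnn _)
  nlinarith [Finset.sum_nonneg (fun m (_ : m ∈ s) => sq_nonneg (b m)),
    Finset.sum_nonneg (fun m (_ : m ∈ s) => sq_nonneg (b (m - k)))]

/-- Young `ℓ¹ * ℓ² → ℓ²` (convolution of `a` with `b`). -/
lemma young1 {a b : ℤ → ℝ} {P : Finset ℤ} (ha : ∀ j, 0 ≤ a j) (hb : ∀ j, 0 ≤ b j)
    (hb0 : ∀ j ∉ P, b j = 0) (s : Finset ℤ) :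
    ∑ m ∈ s, (∑ k ∈ P, a k * b (m - k)) ^ 2
      ≤ (∑ j ∈ P, a j) ^ 2 * ∑ j ∈ P, b j ^ 2 := by
  have hA : (0:ℝ) ≤ ∑ j ∈ P, a j := Finset.sum_nonneg fun j _ => ha j
  have key : ∀ m : ℤ, (∑ k ∈ P, a k * b (m - k)) ^ 2
      ≤ (∑ j ∈ P, a j) * ∑ k ∈ P, a k * b (m - k) ^ 2 := by
    intro m
    have hcs := Finset.sum_mul_sq_le_sq_mul_sq P
      (fun k => Real.sqrt (a k)) (fun k => Real.sqrt (a k) * b (m - k))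
    have h1 : ∑ k ∈ P, Real.sqrt (a k) * (Real.sqrt (a k) * b (m - k))
        = ∑ k ∈ P, a k * b (m - k) := by
      refine Finset.sum_congr rfl fun k _ => ?_
      rw [← mul_assoc, Real.mul_self_sqrt (ha k)]
    have h2 : ∑ k ∈ P, (Real.sqrt (a k)) ^ 2 = ∑ k ∈ P, a k :=
      Finset.sum_congr rfl fun k _ => Real.sq_sqrt (ha k)
    have h3 : ∑ k ∈ P, (Real.sqrt (a k) * b (m - k)) ^ 2
        = ∑ k ∈ P, a k * b (m - k) ^ 2 := by
      refine Finset.sum_congr rfl fun k _ => ?_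
      rw [mul_pow, Real.sq_sqrt (ha k)]
    rw [h1, h2, h3] at hcs; exact hcs
  calc ∑ m ∈ s, (∑ k ∈ P, a k * b (m - k)) ^ 2
      ≤ ∑ m ∈ s, (∑ j ∈ P, a j) * ∑ k ∈ P, a k * b (m - k) ^ 2 :=
        Finset.sum_le_sum fun m _ => key m
    _ = (∑ j ∈ P, a j) * ∑ k ∈ P, a k * ∑ m ∈ s, b (m - k) ^ 2 := by
        rw [← Finset.mul_sum]; rw [Finset.sum_comm]
        congr 1; refine Finset.sum_congr rfl fun k _ => ?_; rw [Finset.mul_sum]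
    _ ≤ (∑ j ∈ P, a j) * ∑ k ∈ P, a k * ∑ j ∈ P, b j ^ 2 := by
        refine mul_le_mul_of_nonneg_left (Finset.sum_le_sum fun k _ => ?_) hA
        exact mul_le_mul_of_nonneg_left
          (sum_shift_le s k (fun j => sq_nonneg _) (fun j hj => by rw [hb0 j hj]; ring)) (ha k)
    _ = (∑ j ∈ P, a j) ^ 2 * ∑ j ∈ P, b j ^ 2 := by rw [← Finset.sum_mul]; ring

/-- Young, other order (convolution of `b` with `a`). -/
lemma young2 {a b : ℤ → ℝ} {P : Finset ℤ} (ha : ∀ j, 0 ≤ a j) (hb : ∀ j, 0 ≤ b j)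
    (ha0 : ∀ j ∉ P, a j = 0) (s : Finset ℤ) :
    ∑ m ∈ s, (∑ k ∈ P, b k * a (m - k)) ^ 2
      ≤ (∑ j ∈ P, a j) ^ 2 * ∑ j ∈ P, b j ^ 2 := by
  have hA : (0:ℝ) ≤ ∑ j ∈ P, a j := Finset.sum_nonneg fun j _ => ha j
  have key : ∀ m : ℤ, (∑ k ∈ P, b k * a (m - k)) ^ 2
      ≤ (∑ j ∈ P, a j) * ∑ k ∈ P, b k ^ 2 * a (m - k) := by
    intro m
    have hcs := Finset.sum_mul_sq_le_sq_mul_sq P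
      (fun k => Real.sqrt (a (m - k))) (fun k => b k * Real.sqrt (a (m - k)))
    have h1 : ∑ k ∈ P, Real.sqrt (a (m - k)) * (b k * Real.sqrt (a (m - k)))
        = ∑ k ∈ P, b k * a (m - k) := by
      refine Finset.sum_congr rfl fun k _ => ?_
      rw [mul_comm (b k) (Real.sqrt (a (m - k))), ← mul_assoc,
        Real.mul_self_sqrt (ha _)]
      ring
    have h2 : ∑ k ∈ P, (Real.sqrt (a (m - k))) ^ 2 = ∑ k ∈ P, a (m - k) :=
      Finset.sum_congr rfl fun k _ => Real.sq_sqrt (ha _)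
    have h3 : ∑ k ∈ P, (b k * Real.sqrt (a (m - k))) ^ 2
        = ∑ k ∈ P, b k ^ 2 * a (m - k) := by
      refine Finset.sum_congr rfl fun k _ => ?_
      rw [mul_pow, Real.sq_sqrt (ha _)]
    rw [h1, h2, h3] at hcs
    have hshift : ∑ k ∈ P, a (m - k) ≤ ∑ j ∈ P, a j := by
      have : ∑ k ∈ P, a (m - k) = ∑ k ∈ P, (fun j => a (- j)) (k - m) := by
        refine Finset.sum_congr rfl fun k _ => ?_; simp [neg_sub]
      rw [this]
      exact sum_shift_le (h := fun j => a (-j)) (P := P.image (fun x => -x)) P m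
        (fun j => ha _)
        (fun j hj => ha0 _ (fun hmem => hj (Finset.mem_image.2 ⟨-j, hmem, by ring⟩)))
        |>.trans (by
          rw [Finset.sum_image (by intro x _ y _ h; have h' : -x = -y := h; omega)]
          exact le_of_eq (Finset.sum_congr rfl fun k _ => by simp))
    calc (∑ k ∈ P, b k * a (m - k)) ^ 2
        ≤ (∑ k ∈ P, a (m - k)) * ∑ k ∈ P, b k ^ 2 * a (m - k) := hcs
      _ ≤ (∑ j ∈ P, a j) * ∑ k ∈ P, b k ^ 2 * a (m - k) := by
          refine mul_le_mul_of_nonneg_right hshift ?_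
          exact Finset.sum_nonneg fun k _ => mul_nonneg (sq_nonneg _) (ha _)
  calc ∑ m ∈ s, (∑ k ∈ P, b k * a (m - k)) ^ 2
      ≤ ∑ m ∈ s, (∑ j ∈ P, a j) * ∑ k ∈ P, b k ^ 2 * a (m - k) :=
        Finset.sum_le_sum fun m _ => key m
    _ = (∑ j ∈ P, a j) * ∑ k ∈ P, b k ^ 2 * ∑ m ∈ s, a (m - k) := by
        rw [← Finset.mul_sum]; rw [Finset.sum_comm]
        congr 1; refine Finset.sum_congr rfl fun k _ => ?_; rw [Finset.mul_sum]
    _ ≤ (∑ j ∈ P, a j) * ∑ k ∈ P, b k ^ 2 * ∑ j ∈ P, a j := by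
        refine mul_le_mul_of_nonneg_left (Finset.sum_le_sum fun k _ => ?_) hA
        exact mul_le_mul_of_nonneg_left
          (sum_shift_le s k (fun j => ha _) (fun j hj => ha0 j hj)) (sq_nonneg _)
    _ = (∑ j ∈ P, a j) ^ 2 * ∑ j ∈ P, b j ^ 2 := by rw [← Finset.sum_mul]; ring

/-- Derivative of `‖z(t)‖²`. -/
lemma hasDeriv_norm_sq {z : ℝ → ℂ} {z' : ℂ} {s : Set ℝ} {t : ℝ}
    (hz : HasDerivWithinAt z z' s t) :
    HasDerivWithinAt (fun u => ‖z u‖ ^ 2) (2 * ((starRingEnd ℂ (z t)) * z').re) s t := by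
  have hre : HasDerivWithinAt (fun u => (z u).re) z'.re s t := by
    simpa [Function.comp_def] using Complex.reCLM.hasFDerivAt.comp_hasDerivWithinAt t hz
  have him : HasDerivWithinAt (fun u => (z u).im) z'.im s t := by
    simpa [Function.comp_def] using Complex.imCLM.hasFDerivAt.comp_hasDerivWithinAt t hz
  have h := (hre.fun_mul hre).fun_add (him.fun_mul him)
  have hfun : (fun u => ‖z u‖ ^ 2)
      = fun u => (z u).re * (z u).re + (z u).im * (z u).im := by
    funext u
    rw [← Complex.normSq_apply, Complex.normSq_eq_norm_sq]
  rw [hfun]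
  refine h.congr_deriv ?_
  simp [Complex.mul_re, Complex.conj_re, Complex.conj_im]
  ring


lemma energy_est {α : ℝ} (hα1 : 1 ≤ α) (hα2 : α ≤ 2) (N : ℕ) (a : ℤ → ℝ)
    (ha : ∀ j, 0 ≤ a j)
    (ha0 : ∀ j ∉ Finset.Icc (-(N:ℤ)) (N:ℤ), a j = 0) :
    (∑ j ∈ Finset.Icc (-(N:ℤ)) (N:ℤ), a j) ^ 2
        ≤ 5 * ∑ k ∈ Finset.Icc (-(N:ℤ)) (N:ℤ), (1 + (k:ℝ) ^ 2) ^ α * a k ^ 2 ∧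
    (∑ m ∈ Finset.Icc (-(N:ℤ)) (N:ℤ), (1 + (m:ℝ) ^ 2) ^ α * a m *
        ∑ k ∈ Finset.Icc (-(N:ℤ)) (N:ℤ), a k * a (m - k))
      ≤ 8 * (∑ j ∈ Finset.Icc (-(N:ℤ)) (N:ℤ), a j) *
          ∑ k ∈ Finset.Icc (-(N:ℤ)) (N:ℤ), (1 + (k:ℝ) ^ 2) ^ α * a k ^ 2 ∧
    (∑ m ∈ Finset.Icc (-(N:ℤ)) (N:ℤ), (1 + (m:ℝ) ^ 2) ^ α *
        (∑ k ∈ Finset.Icc (-(N:ℤ)) (N:ℤ), a k * a (m - k)) ^ 2)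
      ≤ 320 * (∑ k ∈ Finset.Icc (-(N:ℤ)) (N:ℤ), (1 + (k:ℝ) ^ 2) ^ α * a k ^ 2) ^ 2 := by
  set P := Finset.Icc (-(N:ℤ)) (N:ℤ) with hPdef
  set E := ∑ k ∈ P, (1 + (k:ℝ) ^ 2) ^ α * a k ^ 2 with hEdef
  set b : ℤ → ℝ := fun k => (1 + (k:ℝ) ^ 2) ^ (α / 2) * a k with hbdef
  have hX : ∀ k : ℤ, (0:ℝ) < 1 + (k:ℝ) ^ 2 := fun k => by positivity
  have hXone : ∀ k : ℤ, (1:ℝ) ≤ 1 + (k:ℝ) ^ 2 := fun k => by nlinarith [sq_nonneg ((k:ℝ))]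
  have hb : ∀ j, 0 ≤ b j := fun j => mul_nonneg (Real.rpow_nonneg (hX j).le _) (ha j)
  have hb0 : ∀ j ∉ P, b j = 0 := fun j hj => by
    simp only [hbdef]; rw [ha0 j hj, mul_zero]
  have hb2 : ∀ k : ℤ, b k ^ 2 = (1 + (k:ℝ) ^ 2) ^ α * a k ^ 2 := fun k => by
    simp only [hbdef]
    rw [mul_pow, sq_rpow (hX k), div_mul_cancel₀ α (two_ne_zero)]
  have hE : ∑ k ∈ P, b k ^ 2 = E := Finset.sum_congr rfl fun k _ => hb2 k
  have hEnn : (0:ℝ) ≤ E := by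
    rw [hEdef]
    exact Finset.sum_nonneg fun k _ => mul_nonneg (Real.rpow_nonneg (hX k).le _) (sq_nonneg _)
  have hAnn : (0:ℝ) ≤ ∑ j ∈ P, a j := Finset.sum_nonneg fun j _ => ha j
  -- (iii) : ℓ¹ bound
  have hiii : (∑ j ∈ P, a j) ^ 2 ≤ 5 * E := by
    have hcs := Finset.sum_mul_sq_le_sq_mul_sq P (fun k => (1 + (k:ℝ) ^ 2) ^ (-(α / 2))) b
    have h1 : ∑ k ∈ P, (1 + (k:ℝ) ^ 2) ^ (-(α / 2)) * b k = ∑ j ∈ P, a j := by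
      refine Finset.sum_congr rfl fun k _ => ?_
      simp only [hbdef]
      rw [← mul_assoc, ← Real.rpow_add (hX k)]
      norm_num
    have h2 : ∑ k ∈ P, ((1 + (k:ℝ) ^ 2) ^ (-(α / 2))) ^ 2 ≤ 5 := by
      have hterm : ∀ k : ℤ, ((1 + (k:ℝ) ^ 2) ^ (-(α / 2))) ^ 2 ≤ 1 / (1 + (k:ℝ) ^ 2) := by
        intro k
        rw [sq_rpow (hX k)]
        have : (1 + (k:ℝ) ^ 2) ^ (-(α / 2) * 2) ≤ (1 + (k:ℝ) ^ 2) ^ (-1 : ℝ) :=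
          Real.rpow_le_rpow_of_exponent_le (hXone k) (by linarith)
        rwa [Real.rpow_neg_one, ← one_div] at this
      calc ∑ k ∈ P, ((1 + (k:ℝ) ^ 2) ^ (-(α / 2))) ^ 2
          ≤ ∑ k ∈ P, 1 / (1 + (k:ℝ) ^ 2) := Finset.sum_le_sum fun k _ => hterm k
        _ ≤ 5 := basel N
    rw [h1, hE] at hcs
    calc (∑ j ∈ P, a j) ^ 2 ≤ (∑ k ∈ P, ((1 + (k:ℝ) ^ 2) ^ (-(α / 2))) ^ 2) * E := hcs
      _ ≤ 5 * E := mul_le_mul_of_nonneg_right h2 hEnn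
  -- Peetre pointwise key
  have hpkey : ∀ m ∈ P, ∀ k : ℤ, (1 + (m:ℝ) ^ 2) ^ (α / 2) * (a k * a (m - k))
      ≤ 4 * (b k * a (m - k) + a k * b (m - k)) := by
    intro m _ k
    have hp := peetre hα1 hα2 ((k:ℝ)) ((m:ℝ) - (k:ℝ))
    have hp' : (1 + (m:ℝ) ^ 2) ^ (α / 2)
        ≤ 4 * ((1 + (k:ℝ) ^ 2) ^ (α / 2) + (1 + ((m:ℝ) - (k:ℝ)) ^ 2) ^ (α / 2)) := by
      have hm2 : (1 + (m:ℝ) ^ 2) = 1 + ((k:ℝ) + ((m:ℝ) - (k:ℝ))) ^ 2 := by ring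
      rw [hm2]; exact hp
    have hnn : (0:ℝ) ≤ a k * a (m - k) := mul_nonneg (ha k) (ha _)
    have hbmk : b (m - k) = (1 + ((m:ℝ) - (k:ℝ)) ^ 2) ^ (α / 2) * a (m - k) := by
      simp only [hbdef]
      have hc : ((m - k : ℤ):ℝ) = (m:ℝ) - (k:ℝ) := by push_cast; ring
      rw [hc]
    calc (1 + (m:ℝ) ^ 2) ^ (α / 2) * (a k * a (m - k))
        ≤ (4 * ((1 + (k:ℝ) ^ 2) ^ (α / 2) + (1 + ((m:ℝ) - (k:ℝ)) ^ 2) ^ (α / 2)))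
            * (a k * a (m - k)) := mul_le_mul_of_nonneg_right hp' hnn
      _ = 4 * (b k * a (m - k) + a k * b (m - k)) := by
          rw [hbmk]; simp only [hbdef]; ring
  have hinner : ∀ j : ℤ, ∑ m ∈ P, b m * b (m - j) ≤ E := by
    intro j
    rw [← hE]; exact inner_shift_le hb hb0 P j
  -- the T1 bound (with swap)
  have hT1 : ∑ m ∈ P, b m * ∑ k ∈ P, b k * a (m - k) ≤ (∑ j ∈ P, a j) * E := by
    have hswap : ∀ m ∈ P, b m * ∑ k ∈ P, b k * a (m - k)
        = b m * ∑ j ∈ Finset.Icc (-(3 * (N:ℤ))) (3 * (N:ℤ)), a j * b (m - j) := by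
      intro m hm
      rw [conv_swap ha0 hb0 hm]
    calc ∑ m ∈ P, b m * ∑ k ∈ P, b k * a (m - k)
        = ∑ m ∈ P, ∑ j ∈ Finset.Icc (-(3 * (N:ℤ))) (3 * (N:ℤ)), a j * (b m * b (m - j)) := by
          refine Finset.sum_congr rfl fun m hm => ?_
          rw [hswap m hm, Finset.mul_sum]
          exact Finset.sum_congr rfl fun j _ => by ring
      _ = ∑ j ∈ Finset.Icc (-(3 * (N:ℤ))) (3 * (N:ℤ)), a j * ∑ m ∈ P, b m * b (m - j) := by
          rw [Finset.sum_comm]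
          exact Finset.sum_congr rfl fun j _ => by rw [Finset.mul_sum]
      _ ≤ ∑ j ∈ Finset.Icc (-(3 * (N:ℤ))) (3 * (N:ℤ)), a j * E :=
          Finset.sum_le_sum fun j _ => mul_le_mul_of_nonneg_left (hinner j) (ha j)
      _ = (∑ j ∈ Finset.Icc (-(3 * (N:ℤ))) (3 * (N:ℤ)), a j) * E := by rw [Finset.sum_mul]
      _ = (∑ j ∈ P, a j) * E := by
          congr 1
          refine sum_eq_support (P := P) ?_ (le_refl _) ha0
          intro x hx; have := Finset.mem_Icc.1 hx; simp only [Finset.mem_Icc]; omega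
  have hT2 : ∑ m ∈ P, b m * ∑ k ∈ P, a k * b (m - k) ≤ (∑ j ∈ P, a j) * E := by
    calc ∑ m ∈ P, b m * ∑ k ∈ P, a k * b (m - k)
        = ∑ k ∈ P, a k * ∑ m ∈ P, b m * b (m - k) := by
          simp only [Finset.mul_sum]
          rw [Finset.sum_comm]
          exact Finset.sum_congr rfl fun k _ => Finset.sum_congr rfl fun m _ => by ring
      _ ≤ ∑ k ∈ P, a k * E :=
          Finset.sum_le_sum fun k _ => mul_le_mul_of_nonneg_left (hinner k) (ha k)
      _ = (∑ j ∈ P, a j) * E := by rw [Finset.sum_mul]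
  refine ⟨hiii, ?_, ?_⟩
  · -- (i)
    have hwa : ∀ m : ℤ, (1 + (m:ℝ) ^ 2) ^ α * a m
        = (1 + (m:ℝ) ^ 2) ^ (α / 2) * b m := by
      intro m
      simp only [hbdef]
      rw [← mul_assoc, ← Real.rpow_add (hX m), add_halves]
    calc ∑ m ∈ P, (1 + (m:ℝ) ^ 2) ^ α * a m * ∑ k ∈ P, a k * a (m - k)
        ≤ ∑ m ∈ P, b m * ∑ k ∈ P, 4 * (b k * a (m - k) + a k * b (m - k)) := by
          refine Finset.sum_le_sum fun m hm => ?_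
          rw [hwa m]
          have hrw : (1 + (m:ℝ) ^ 2) ^ (α / 2) * b m * ∑ k ∈ P, a k * a (m - k)
              = b m * ∑ k ∈ P, (1 + (m:ℝ) ^ 2) ^ (α / 2) * (a k * a (m - k)) := by
            rw [← Finset.mul_sum]; ring
          rw [hrw]
          exact mul_le_mul_of_nonneg_left
            (Finset.sum_le_sum fun k _ => hpkey m hm k) (hb m)
      _ = 4 * ((∑ m ∈ P, b m * ∑ k ∈ P, b k * a (m - k))
            + ∑ m ∈ P, b m * ∑ k ∈ P, a k * b (m - k)) := by
          have hsplit : ∀ m : ℤ, b m * ∑ k ∈ P, 4 * (b k * a (m - k) + a k * b (m - k))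
              = 4 * (b m * ∑ k ∈ P, b k * a (m - k))
                + 4 * (b m * ∑ k ∈ P, a k * b (m - k)) := by
            intro m
            simp only [Finset.mul_sum]
            rw [← Finset.sum_add_distrib]
            exact Finset.sum_congr rfl fun k _ => by ring
          calc ∑ m ∈ P, b m * ∑ k ∈ P, 4 * (b k * a (m - k) + a k * b (m - k))
              = ∑ m ∈ P, (4 * (b m * ∑ k ∈ P, b k * a (m - k))
                  + 4 * (b m * ∑ k ∈ P, a k * b (m - k))) :=
                Finset.sum_congr rfl fun m _ => hsplit m
            _ = 4 * ((∑ m ∈ P, b m * ∑ k ∈ P, b k * a (m - k))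
                  + ∑ m ∈ P, b m * ∑ k ∈ P, a k * b (m - k)) := by
                rw [Finset.sum_add_distrib, ← Finset.mul_sum, ← Finset.mul_sum]
                ring
      _ ≤ 4 * ((∑ j ∈ P, a j) * E + (∑ j ∈ P, a j) * E) := by
          have := add_le_add hT1 hT2; linarith
      _ = 8 * (∑ j ∈ P, a j) * E := by ring
  · -- (ii)
    set v1 : ℤ → ℝ := fun m => ∑ k ∈ P, b k * a (m - k) with hv1
    set v2 : ℤ → ℝ := fun m => ∑ k ∈ P, a k * b (m - k) with hv2
    have hv1nn : ∀ m, 0 ≤ v1 m :=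
      fun m => Finset.sum_nonneg fun k _ => mul_nonneg (hb k) (ha _)
    have hv2nn : ∀ m, 0 ≤ v2 m :=
      fun m => Finset.sum_nonneg fun k _ => mul_nonneg (ha k) (hb _)
    have hcm : ∀ m ∈ P, (1 + (m:ℝ) ^ 2) ^ α * (∑ k ∈ P, a k * a (m - k)) ^ 2
        ≤ 32 * (v1 m ^ 2 + v2 m ^ 2) := by
      intro m hm
      have hcnn : (0:ℝ) ≤ ∑ k ∈ P, a k * a (m - k) :=
        Finset.sum_nonneg fun k _ => mul_nonneg (ha k) (ha _)
      have h1 : (1 + (m:ℝ) ^ 2) ^ (α / 2) * (∑ k ∈ P, a k * a (m - k))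
          ≤ 4 * (v1 m + v2 m) := by
        rw [Finset.mul_sum]
        calc ∑ k ∈ P, (1 + (m:ℝ) ^ 2) ^ (α / 2) * (a k * a (m - k))
            ≤ ∑ k ∈ P, 4 * (b k * a (m - k) + a k * b (m - k)) :=
              Finset.sum_le_sum fun k _ => hpkey m hm k
          _ = 4 * (v1 m + v2 m) := by
              simp only [hv1, hv2]
              rw [mul_add, Finset.mul_sum, Finset.mul_sum, ← Finset.sum_add_distrib]
              exact Finset.sum_congr rfl fun k _ => by ring
      have hlnn : (0:ℝ) ≤ (1 + (m:ℝ) ^ 2) ^ (α / 2) * (∑ k ∈ P, a k * a (m - k)) :=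
        mul_nonneg (Real.rpow_nonneg (hX m).le _) hcnn
      have hsq : ((1 + (m:ℝ) ^ 2) ^ (α / 2) * (∑ k ∈ P, a k * a (m - k))) ^ 2
          ≤ (4 * (v1 m + v2 m)) ^ 2 := by
        exact pow_le_pow_left₀ hlnn h1 2
      have hexp : ((1 + (m:ℝ) ^ 2) ^ (α / 2) * (∑ k ∈ P, a k * a (m - k))) ^ 2
          = (1 + (m:ℝ) ^ 2) ^ α * (∑ k ∈ P, a k * a (m - k)) ^ 2 := by
        rw [mul_pow, sq_rpow (hX m), div_mul_cancel₀ α (two_ne_zero)]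
      rw [hexp] at hsq
      nlinarith [sq_nonneg (v1 m - v2 m)]
    calc ∑ m ∈ P, (1 + (m:ℝ) ^ 2) ^ α * (∑ k ∈ P, a k * a (m - k)) ^ 2
        ≤ ∑ m ∈ P, 32 * (v1 m ^ 2 + v2 m ^ 2) := Finset.sum_le_sum hcm
      _ = 32 * ((∑ m ∈ P, v1 m ^ 2) + ∑ m ∈ P, v2 m ^ 2) := by
          rw [← Finset.sum_add_distrib, Finset.mul_sum]
      _ ≤ 32 * ((∑ j ∈ P, a j) ^ 2 * E + (∑ j ∈ P, a j) ^ 2 * E) := by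
          have h1 : ∑ m ∈ P, v1 m ^ 2 ≤ (∑ j ∈ P, a j) ^ 2 * E := by
            rw [← hE]; exact young2 ha hb ha0 P
          have h2 : ∑ m ∈ P, v2 m ^ 2 ≤ (∑ j ∈ P, a j) ^ 2 * E := by
            rw [← hE]; exact young1 ha hb hb0 P
          linarith
      _ = 64 * (∑ j ∈ P, a j) ^ 2 * E := by ring
      _ ≤ 64 * (5 * E) * E := by
          refine mul_le_mul_of_nonneg_right ?_ hEnn
          have := hiii; nlinarith
      _ = 320 * E ^ 2 := by ring


lemma ode_bound {N : ℕ} {U dU : ℝ → ℤ → ℂ} {t : ℝ} {m : ℤ} {α : ℝ} (hα1 : 1 ≤ α)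
    (heq : ((1 + |(m : ℝ)| ^ α : ℝ) : ℂ) * dU t m =
      Complex.I * (m : ℂ) * (U t m + (1 / 2 : ℂ) *
        ∑ k ∈ Finset.Icc (-(N : ℤ)) (N : ℤ),
          if |m - k| ≤ (N : ℤ) then U t k * U t (m - k) else 0)) :
    2 * ((starRingEnd ℂ (U t m)) * dU t m).re
      ≤ ‖U t m‖ * ∑ k ∈ Finset.Icc (-(N:ℤ)) (N:ℤ), ‖U t k‖ * ‖U t (m - k)‖ ∧
    ‖dU t m‖ ≤ ‖U t m‖ + (1/2) * ∑ k ∈ Finset.Icc (-(N:ℤ)) (N:ℤ), ‖U t k‖ * ‖U t (m - k)‖ := by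
  set S : ℂ := ∑ k ∈ Finset.Icc (-(N : ℤ)) (N : ℤ),
    if |m - k| ≤ (N : ℤ) then U t k * U t (m - k) else 0 with hSdef
  set Sa : ℝ := ∑ k ∈ Finset.Icc (-(N:ℤ)) (N:ℤ), ‖U t k‖ * ‖U t (m - k)‖ with hSadef
  set D : ℝ := 1 + |(m:ℝ)| ^ α with hDdef
  have hD : 0 < D := by
    have := Real.rpow_nonneg (abs_nonneg ((m:ℝ))) α
    rw [hDdef]; linarith
  have hDne : ((D:ℝ):ℂ) ≠ 0 := Complex.ofReal_ne_zero.2 hD.ne'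
  have hdUeq : dU t m = (Complex.I * (m:ℂ) * (U t m + (1/2 : ℂ) * S)) / ((D:ℝ):ℂ) := by
    rw [eq_div_iff hDne, mul_comm]
    exact heq
  have hmD : |(m:ℝ)| ≤ D := by
    rcases eq_or_ne m 0 with rfl | hm
    · simp [hDdef]
      positivity
    · have h1 : (1:ℝ) ≤ |(m:ℝ)| := by
        have : (1:ℤ) ≤ |m| := Int.one_le_abs hm
        calc (1:ℝ) ≤ ((|m| : ℤ) : ℝ) := by exact_mod_cast this
          _ = |(m:ℝ)| := by push_cast; rfl
      have h2 := Real.rpow_le_rpow_of_exponent_le h1 hα1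
      rw [Real.rpow_one] at h2
      rw [hDdef]; linarith
  have hSb : ‖S‖ ≤ Sa := by
    rw [hSdef, hSadef]
    refine (norm_sum_le _ _).trans (Finset.sum_le_sum fun k _ => ?_)
    split
    · rw [norm_mul]
    · simp only [norm_zero]
      positivity
  have hSann : (0:ℝ) ≤ Sa := by
    rw [hSadef]; positivity
  have hUn : (0:ℝ) ≤ ‖U t m‖ := norm_nonneg _
  have hnormcast : ‖(Complex.I * (m:ℂ))‖ = |(m:ℝ)| := by
    rw [norm_mul, Complex.norm_I, one_mul, Complex.norm_intCast]
  constructor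
  · -- real part bound
    have hre : ((starRingEnd ℂ (U t m)) * dU t m).re
        = ((starRingEnd ℂ (U t m)) * (Complex.I * (m:ℂ) * (U t m + (1/2:ℂ) * S))).re / D := by
      rw [hdUeq, mul_div_assoc', Complex.div_ofReal_re]
    have hsplit : (starRingEnd ℂ (U t m)) * (Complex.I * (m:ℂ) * (U t m + (1/2:ℂ) * S))
        = Complex.I * (m:ℂ) * ((Complex.normSq (U t m) : ℝ) : ℂ)
          + (1/2:ℂ) * ((starRingEnd ℂ (U t m)) * (Complex.I * (m:ℂ) * S)) := by
      rw [← Complex.mul_conj]; ring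
    have hre0 : (Complex.I * (m:ℂ) * ((Complex.normSq (U t m) : ℝ) : ℂ)).re = 0 := by
      simp [Complex.mul_re, Complex.mul_im]
    have habs : |((starRingEnd ℂ (U t m)) * (Complex.I * (m:ℂ) * S)).re|
        ≤ ‖U t m‖ * (|(m:ℝ)| * ‖S‖) := by
      calc |((starRingEnd ℂ (U t m)) * (Complex.I * (m:ℂ) * S)).re|
          ≤ ‖(starRingEnd ℂ (U t m)) * (Complex.I * (m:ℂ) * S)‖ := by
            exact Complex.abs_re_le_norm _
        _ = ‖U t m‖ * (|(m:ℝ)| * ‖S‖) := by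
            rw [norm_mul, RCLike.norm_conj, norm_mul, hnormcast]
    have hnum : ((starRingEnd ℂ (U t m)) * (Complex.I * (m:ℂ) * (U t m + (1/2:ℂ) * S))).re
        ≤ (1/2) * (‖U t m‖ * (|(m:ℝ)| * ‖S‖)) := by
      rw [hsplit, Complex.add_re, hre0, zero_add, Complex.mul_re]
      have h12 : ((1:ℂ)/2).re = 1/2 := by norm_num
      have h12' : ((1:ℂ)/2).im = 0 := by norm_num
      rw [h12, h12']
      have := (abs_le.1 habs).2
      nlinarith [norm_nonneg (U t m), norm_nonneg S, abs_nonneg ((m:ℝ))]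
    rw [hre]
    calc 2 * (((starRingEnd ℂ (U t m)) * (Complex.I * (m:ℂ) * (U t m + (1/2:ℂ) * S))).re / D)
        = (2 * ((starRingEnd ℂ (U t m)) * (Complex.I * (m:ℂ) * (U t m + (1/2:ℂ) * S))).re) / D := by
          ring
      _ ≤ (‖U t m‖ * (|(m:ℝ)| * ‖S‖)) / D := by
          refine (div_le_div_iff_of_pos_right hD).2 ?_
          linarith [hnum]
      _ ≤ ‖U t m‖ * ‖S‖ := by
          rw [div_le_iff₀ hD]
          nlinarith [mul_le_mul_of_nonneg_left hmD (mul_nonneg hUn (norm_nonneg S))]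
      _ ≤ ‖U t m‖ * Sa := mul_le_mul_of_nonneg_left hSb hUn
  · -- norm bound
    rw [hdUeq]
    rw [norm_div, Complex.norm_real, Real.norm_eq_abs, abs_of_pos hD]
    rw [norm_mul, hnormcast]
    have h1 : ‖U t m + (1/2:ℂ) * S‖ ≤ ‖U t m‖ + (1/2) * Sa := by
      refine (norm_add_le _ _).trans ?_
      have : ‖(1/2:ℂ) * S‖ = (1/2) * ‖S‖ := by
        rw [norm_mul]; norm_num
      rw [this]
      linarith
    have h2 : |(m:ℝ)| * ‖U t m + (1/2:ℂ) * S‖ / D ≤ ‖U t m + (1/2:ℂ) * S‖ := by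
      rw [div_le_iff₀ hD]
      nlinarith [mul_le_mul_of_nonneg_left hmD (norm_nonneg (U t m + (1/2:ℂ) * S))]
    linarith


lemma gronwall_sqrt {T : ℝ} (hT : 0 < T) {F F' : ℝ → ℝ}
    (hFnn : ∀ t, 0 ≤ F t)
    (hFd : ∀ t ∈ Set.Icc (0:ℝ) T, HasDerivWithinAt F (F' t) (Set.Icc 0 T) t)
    (hkey : ∀ t ∈ Set.Icc (0:ℝ) T, F' t ≤ 20 * Real.sqrt (F t + 1) * (F t + 1))
    {B : ℝ} (hB : 0 < B) (hF0 : F 0 ≤ B)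
    (hTle : T ≤ 1/(20*Real.sqrt (B+1))) :
    ∀ t ∈ Set.Icc (0:ℝ) T, F t + 1 ≤ 4*(B+1) := by
  have hsB : 0 < Real.sqrt (B+1) := Real.sqrt_pos.2 (by linarith)
  set H : ℝ → ℝ := fun u => (Real.sqrt (F u + 1))⁻¹ with hHdef
  set G : ℝ → ℝ := fun u => H u + 10*u with hGdef
  have hFt1 : ∀ u, 0 < F u + 1 := fun u => by linarith [hFnn u]
  have hsF : ∀ u, 0 < Real.sqrt (F u + 1) := fun u => Real.sqrt_pos.2 (hFt1 u)
  have hGd : ∀ t ∈ Set.Icc (0:ℝ) T, HasDerivWithinAt G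
      (-(1/(2*Real.sqrt (F t + 1)) * 1) / (Real.sqrt (F t+1))^2 * F' t + 10)
      (Set.Icc 0 T) t := by
    intro t ht
    have h1 : HasDerivAt (fun x : ℝ => x + 1) 1 (F t) := (hasDerivAt_id (F t)).add_const 1
    have h2 : HasDerivAt Real.sqrt (1/(2*Real.sqrt (F t + 1))) (F t + 1) :=
      Real.hasDerivAt_sqrt (hFt1 t).ne'
    have h3 : HasDerivAt (fun x : ℝ => Real.sqrt (x+1))
        (1/(2*Real.sqrt (F t+1)) * 1) (F t) := by
      have := h2.comp (F t) h1
      simpa [Function.comp_def] using this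
    have h4 : HasDerivAt (fun x : ℝ => (Real.sqrt (x+1))⁻¹)
        (-(1/(2*Real.sqrt (F t+1)) * 1) / (Real.sqrt (F t+1))^2) (F t) :=
      h3.inv (hsF t).ne'
    have h5 : HasDerivWithinAt H
        (-(1/(2*Real.sqrt (F t+1)) * 1) / (Real.sqrt (F t+1))^2 * F' t) (Set.Icc 0 T) t := by
      have := h4.comp_hasDerivWithinAt t (hFd t ht)
      simpa [hHdef, Function.comp_def] using this
    have h6 : HasDerivWithinAt (fun u : ℝ => 10*u) 10 (Set.Icc 0 T) t := by
      simpa using (hasDerivWithinAt_id t (Set.Icc (0:ℝ) T)).const_mul (10:ℝ)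
    exact h5.add h6
  have hGderiv_nonneg : ∀ t ∈ Set.Icc (0:ℝ) T,
      0 ≤ -(1/(2*Real.sqrt (F t+1)) * 1) / (Real.sqrt (F t+1))^2 * F' t + 10 := by
    intro t ht
    have hs : 0 < Real.sqrt (F t + 1) := hsF t
    have hsq : (Real.sqrt (F t + 1))^2 = F t + 1 := Real.sq_sqrt (hFt1 t).le
    have hkey' : F' t ≤ 20 * Real.sqrt (F t+1) * (Real.sqrt (F t+1))^2 := by
      rw [hsq]; exact hkey t ht
    have hc : (0:ℝ) < (1/(2*Real.sqrt (F t+1)) * 1) / (Real.sqrt (F t+1))^2 := by positivity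
    have hmul : (1/(2*Real.sqrt (F t+1)) * 1) / (Real.sqrt (F t+1))^2 * F' t
        ≤ (1/(2*Real.sqrt (F t+1)) * 1) / (Real.sqrt (F t+1))^2
            * (20 * Real.sqrt (F t+1) * (Real.sqrt (F t+1))^2) :=
      mul_le_mul_of_nonneg_left hkey' hc.le
    have heq : (1/(2*Real.sqrt (F t+1)) * 1) / (Real.sqrt (F t+1))^2
        * (20 * Real.sqrt (F t+1) * (Real.sqrt (F t+1))^2) = 10 := by
      field_simp
      ring
    have hfin : (1/(2*Real.sqrt (F t+1)) * 1) / (Real.sqrt (F t+1))^2 * F' t ≤ 10 := by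
      rw [heq] at hmul; exact hmul
    have hneg : -(1/(2*Real.sqrt (F t+1)) * 1) / (Real.sqrt (F t+1))^2 * F' t
        = -((1/(2*Real.sqrt (F t+1)) * 1) / (Real.sqrt (F t+1))^2 * F' t) := by ring
    rw [hneg]
    linarith
  have hGc : ContinuousOn G (Set.Icc 0 T) := fun u hu => (hGd u hu).continuousWithinAt
  have hmono : MonotoneOn G (Set.Icc 0 T) := by
    apply monotoneOn_of_deriv_nonneg (convex_Icc 0 T) hGc
    · intro x hx
      rw [interior_Icc] at hx
      have hx' : x ∈ Set.Icc (0:ℝ) T := Set.Ioo_subset_Icc_self hx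
      exact ((hGd x hx').hasDerivAt
        (Icc_mem_nhds hx.1 hx.2)).differentiableAt.differentiableWithinAt
    · intro x hx
      rw [interior_Icc] at hx
      have hx' : x ∈ Set.Icc (0:ℝ) T := Set.Ioo_subset_Icc_self hx
      have hd := (hGd x hx').hasDerivAt (Icc_mem_nhds hx.1 hx.2)
      rw [hd.deriv]
      exact hGderiv_nonneg x hx'
  intro t ht
  have h0mem : (0:ℝ) ∈ Set.Icc (0:ℝ) T := ⟨le_refl 0, hT.le⟩
  have hG0 := hmono h0mem ht ht.1
  have hH0 : (Real.sqrt (B+1))⁻¹ ≤ H 0 := by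
    simp only [hHdef]
    exact inv_anti₀ (hsF 0) (Real.sqrt_le_sqrt (by linarith))
  have ht10 : 10 * t ≤ (2*Real.sqrt (B+1))⁻¹ := by
    have h1 : t ≤ 1/(20*Real.sqrt (B+1)) := le_trans ht.2 hTle
    have h2 : (10:ℝ)*(1/(20*Real.sqrt (B+1))) = (2*Real.sqrt (B+1))⁻¹ := by
      field_simp
      ring
    nlinarith
  have harith : H 0 ≤ H t + 10*t := by
    simp only [hGdef] at hG0
    have : H 0 + 10*0 ≤ H t + 10*t := hG0
    linarith
  have hHt : (2*Real.sqrt (B+1))⁻¹ ≤ H t := by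
    have hhalf : (Real.sqrt (B+1))⁻¹ - (2*Real.sqrt (B+1))⁻¹ = (2*Real.sqrt (B+1))⁻¹ := by
      field_simp
      ring
    linarith
  have hs2 : Real.sqrt (F t + 1) ≤ 2*Real.sqrt (B+1) := by
    have h1 : 0 < (2*Real.sqrt (B+1))⁻¹ := by positivity
    have h2 := inv_anti₀ h1 hHt
    rw [inv_inv] at h2
    simpa [hHdef, inv_inv] using h2
  nlinarith [Real.sq_sqrt (hFt1 t).le, Real.sqrt_nonneg (F t + 1),
    Real.sq_sqrt (show (0:ℝ) ≤ B+1 by linarith), hsB, hs2]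

end Stmt17Aux



open Stmt17Aux in
/-- Uniform (in `N`) local-in-time `H^α` bounds for the Fourier spectral
Galerkin approximation of the fractional BBM equation: for `α ∈ [1,2]` and every `B > 0`
there exist `T̄ > 0` and `C > 0`, depending only on `B` and `α` (in particular independent of
`N`), such that any Galerkin coefficient solution `U` (supported in `|k| ≤ N`, real-valued in
the sense `U_{-k} = conj U_k`, solving `(1+|m|^α) U_m' = i m (U_m + (1/2) Σ_{k+l=m} U_k U_l)`
on `[0, T̄]`) with initial discrete `H^α` norm `Σ (1+|k|²)^α |U_k(0)|² ≤ B` satisfies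
`Σ (1+|k|²)^α |U_k(t)|² ≤ C` and `Σ (1+|k|²)^α |U_k'(t)|² ≤ C` for all `t ∈ [0, T̄]`. -/
theorem stmt17 (α : ℝ) (hα1 : 1 ≤ α) (hα2 : α ≤ 2) :
    ∀ B : ℝ, 0 < B →
      ∃ Tbar C : ℝ, 0 < Tbar ∧ 0 < C ∧
        ∀ (N : ℕ) (U dU : ℝ → ℤ → ℂ),
          (∀ (t : ℝ) (k : ℤ), (N : ℤ) < |k| → U t k = 0) →
          (∀ (t : ℝ) (k : ℤ), U t (-k) = starRingEnd ℂ (U t k)) →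
          (∀ (k : ℤ), ∀ t ∈ Set.Icc (0 : ℝ) Tbar,
            HasDerivWithinAt (fun s => U s k) (dU t k) (Set.Icc 0 Tbar) t) →
          (∀ m : ℤ, |m| ≤ (N : ℤ) → ∀ t ∈ Set.Icc (0 : ℝ) Tbar,
            ((1 + |(m : ℝ)| ^ α : ℝ) : ℂ) * dU t m =
              Complex.I * (m : ℂ) * (U t m + (1 / 2 : ℂ) *
                ∑ k ∈ Finset.Icc (-(N : ℤ)) (N : ℤ),
                  if |m - k| ≤ (N : ℤ) then U t k * U t (m - k) else 0)) →
          (∑ k ∈ Finset.Icc (-(N : ℤ)) (N : ℤ), (1 + |(k : ℝ)| ^ 2) ^ α * ‖U 0 k‖ ^ 2 ≤ B) →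
          ∀ t ∈ Set.Icc (0 : ℝ) Tbar,
            (∑ k ∈ Finset.Icc (-(N : ℤ)) (N : ℤ), (1 + |(k : ℝ)| ^ 2) ^ α * ‖U t k‖ ^ 2 ≤ C) ∧
            (∑ k ∈ Finset.Icc (-(N : ℤ)) (N : ℤ), (1 + |(k : ℝ)| ^ 2) ^ α * ‖dU t k‖ ^ 2 ≤ C) := by
  intro B hB
  have hsB : 0 < Real.sqrt (B+1) := Real.sqrt_pos.2 (by linarith)
  refine ⟨1/(20*Real.sqrt (B+1)), 2*(4*(B+1)) + 160*(4*(B+1))^2, by positivity, by positivity, ?_⟩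
  set T : ℝ := 1/(20*Real.sqrt (B+1)) with hTdef
  have hT : 0 < T := by rw [hTdef]; positivity
  intro N U dU hsupp hreal hderiv hode hinit t htIcc
  simp only [_root_.sq_abs] at hinit
  simp only [_root_.sq_abs]
  have hU0 : ∀ (u:ℝ), ∀ j ∉ Finset.Icc (-(N:ℤ)) (N:ℤ), U u j = 0 := by
    intro u j hj
    apply hsupp
    rw [Finset.mem_Icc] at hj
    rw [Int.abs_eq_natAbs]
    omega
  set F : ℝ → ℝ := fun u => ∑ k ∈ Finset.Icc (-(N:ℤ)) (N:ℤ), (1 + (k:ℝ)^2)^α * ‖U u k‖^2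
    with hFdef
  set F' : ℝ → ℝ := fun u => ∑ k ∈ Finset.Icc (-(N:ℤ)) (N:ℤ),
    (1 + (k:ℝ)^2)^α * (2*((starRingEnd ℂ (U u k)) * dU u k).re) with hF'def
  have hFnn : ∀ u, 0 ≤ F u := by
    intro u
    rw [hFdef]
    exact Finset.sum_nonneg fun k _ => by positivity
  have hFd : ∀ u ∈ Set.Icc (0:ℝ) T, HasDerivWithinAt F (F' u) (Set.Icc 0 T) u := by
    intro u hu
    rw [hFdef, hF'def]
    apply HasDerivWithinAt.fun_sum
    intro k _
    exact (hasDeriv_norm_sq (hderiv k u hu)).const_mul _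
  have hest : ∀ u ∈ Set.Icc (0:ℝ) T,
      F' u ≤ 20 * Real.sqrt (F u + 1) * (F u + 1) ∧
      (∑ k ∈ Finset.Icc (-(N:ℤ)) (N:ℤ), (1 + (k:ℝ)^2)^α * ‖dU u k‖^2)
        ≤ 2 * F u + 160 * (F u)^2 := by
    intro u hu
    have ha : ∀ j : ℤ, 0 ≤ ‖U u j‖ := fun j => norm_nonneg _
    have ha0 : ∀ j ∉ Finset.Icc (-(N:ℤ)) (N:ℤ), ‖U u j‖ = 0 := by
      intro j hj; rw [hU0 u j hj, norm_zero]
    obtain ⟨hiii, hi, hii⟩ := energy_est hα1 hα2 N (fun j => ‖U u j‖) ha ha0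
    have hEF : ∑ k ∈ Finset.Icc (-(N:ℤ)) (N:ℤ), (1 + (k:ℝ)^2)^α * ‖U u k‖^2 = F u := by
      rw [hFdef]
    rw [hEF] at hiii hi hii
    have hA : (0:ℝ) ≤ ∑ j ∈ Finset.Icc (-(N:ℤ)) (N:ℤ), ‖U u j‖ :=
      Finset.sum_nonneg fun j _ => ha j
    have hs : (0:ℝ) ≤ Real.sqrt (F u + 1) := Real.sqrt_nonneg _
    have hsq : (Real.sqrt (F u + 1))^2 = F u + 1 := Real.sq_sqrt (by linarith [hFnn u])
    have hA25 : ∑ j ∈ Finset.Icc (-(N:ℤ)) (N:ℤ), ‖U u j‖ ≤ 5/2 * Real.sqrt (F u + 1) := by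
      nlinarith [hiii, hsq, hs, hA, hFnn u]
    constructor
    · -- first bound
      have hptwise : ∀ m ∈ Finset.Icc (-(N:ℤ)) (N:ℤ),
          (1 + (m:ℝ)^2)^α * (2*((starRingEnd ℂ (U u m)) * dU u m).re)
          ≤ (1 + (m:ℝ)^2)^α * ‖U u m‖ *
              ∑ k ∈ Finset.Icc (-(N:ℤ)) (N:ℤ), ‖U u k‖ * ‖U u (m - k)‖ := by
        intro m hm
        have hmabs : |m| ≤ (N:ℤ) := by
          rw [Finset.mem_Icc] at hm
          rw [Int.abs_eq_natAbs]
          omega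
        have hob := (ode_bound hα1 (hode m hmabs u hu)).1
        have hw : (0:ℝ) ≤ (1 + (m:ℝ)^2)^α := by positivity
        calc (1 + (m:ℝ)^2)^α * (2*((starRingEnd ℂ (U u m)) * dU u m).re)
            ≤ (1 + (m:ℝ)^2)^α * (‖U u m‖ *
                ∑ k ∈ Finset.Icc (-(N:ℤ)) (N:ℤ), ‖U u k‖ * ‖U u (m - k)‖) :=
              mul_le_mul_of_nonneg_left hob hw
          _ = (1 + (m:ℝ)^2)^α * ‖U u m‖ *
                ∑ k ∈ Finset.Icc (-(N:ℤ)) (N:ℤ), ‖U u k‖ * ‖U u (m - k)‖ := by ring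
      have h1 : F' u ≤ ∑ m ∈ Finset.Icc (-(N:ℤ)) (N:ℤ), (1 + (m:ℝ)^2)^α * ‖U u m‖ *
          ∑ k ∈ Finset.Icc (-(N:ℤ)) (N:ℤ), ‖U u k‖ * ‖U u (m - k)‖ := by
        rw [hF'def]
        exact Finset.sum_le_sum hptwise
      have hmul := mul_le_mul_of_nonneg_right hA25 (hFnn u)
      nlinarith [h1, hi, hmul, hs, hFnn u]
    · -- second bound
      have hptwise : ∀ m ∈ Finset.Icc (-(N:ℤ)) (N:ℤ),
          (1 + (m:ℝ)^2)^α * ‖dU u m‖^2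
          ≤ 2*((1 + (m:ℝ)^2)^α * ‖U u m‖^2)
            + (1/2)*((1 + (m:ℝ)^2)^α *
                (∑ k ∈ Finset.Icc (-(N:ℤ)) (N:ℤ), ‖U u k‖ * ‖U u (m - k)‖)^2) := by
        intro m hm
        have hmabs : |m| ≤ (N:ℤ) := by
          rw [Finset.mem_Icc] at hm
          rw [Int.abs_eq_natAbs]
          omega
        have hob := (ode_bound hα1 (hode m hmabs u hu)).2
        have hw : (0:ℝ) ≤ (1 + (m:ℝ)^2)^α := by positivity
        have hcnn : (0:ℝ) ≤ ∑ k ∈ Finset.Icc (-(N:ℤ)) (N:ℤ), ‖U u k‖ * ‖U u (m - k)‖ :=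
          Finset.sum_nonneg fun k _ => mul_nonneg (ha k) (ha _)
        have hsq2 : ‖dU u m‖^2 ≤ (‖U u m‖
            + (1/2) * ∑ k ∈ Finset.Icc (-(N:ℤ)) (N:ℤ), ‖U u k‖ * ‖U u (m - k)‖)^2 :=
          pow_le_pow_left₀ (norm_nonneg _) hob 2
        have q : (‖U u m‖
            + (1/2) * ∑ k ∈ Finset.Icc (-(N:ℤ)) (N:ℤ), ‖U u k‖ * ‖U u (m - k)‖)^2
            ≤ 2*‖U u m‖^2
              + (1/2)*(∑ k ∈ Finset.Icc (-(N:ℤ)) (N:ℤ), ‖U u k‖ * ‖U u (m - k)‖)^2 := by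
          nlinarith [sq_nonneg (‖U u m‖
            - (1/2) * ∑ k ∈ Finset.Icc (-(N:ℤ)) (N:ℤ), ‖U u k‖ * ‖U u (m - k)‖)]
        calc (1 + (m:ℝ)^2)^α * ‖dU u m‖^2
            ≤ (1 + (m:ℝ)^2)^α * ((‖U u m‖
                + (1/2) * ∑ k ∈ Finset.Icc (-(N:ℤ)) (N:ℤ), ‖U u k‖ * ‖U u (m - k)‖)^2) :=
              mul_le_mul_of_nonneg_left hsq2 hw
          _ ≤ (1 + (m:ℝ)^2)^α * (2*‖U u m‖^2
                + (1/2)*(∑ k ∈ Finset.Icc (-(N:ℤ)) (N:ℤ), ‖U u k‖ * ‖U u (m - k)‖)^2) :=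
              mul_le_mul_of_nonneg_left q hw
          _ = 2*((1 + (m:ℝ)^2)^α * ‖U u m‖^2)
              + (1/2)*((1 + (m:ℝ)^2)^α *
                  (∑ k ∈ Finset.Icc (-(N:ℤ)) (N:ℤ), ‖U u k‖ * ‖U u (m - k)‖)^2) := by ring
      calc ∑ k ∈ Finset.Icc (-(N:ℤ)) (N:ℤ), (1 + (k:ℝ)^2)^α * ‖dU u k‖^2
          ≤ ∑ m ∈ Finset.Icc (-(N:ℤ)) (N:ℤ), (2*((1 + (m:ℝ)^2)^α * ‖U u m‖^2)
              + (1/2)*((1 + (m:ℝ)^2)^α *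
                  (∑ k ∈ Finset.Icc (-(N:ℤ)) (N:ℤ), ‖U u k‖ * ‖U u (m - k)‖)^2)) :=
            Finset.sum_le_sum hptwise
        _ = 2 * F u + (1/2) * ∑ m ∈ Finset.Icc (-(N:ℤ)) (N:ℤ), (1 + (m:ℝ)^2)^α *
              (∑ k ∈ Finset.Icc (-(N:ℤ)) (N:ℤ), ‖U u k‖ * ‖U u (m - k)‖)^2 := by
            rw [Finset.sum_add_distrib, ← Finset.mul_sum, ← Finset.mul_sum, ← hEF]
        _ ≤ 2 * F u + (1/2) * (320 * (F u)^2) := by linarith [hii]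
        _ = 2 * F u + 160 * (F u)^2 := by ring
  have hF0 : F 0 ≤ B := hinit
  have hFb := gronwall_sqrt hT hFnn hFd (fun u hu => (hest u hu).1) hB hF0 (le_of_eq hTdef)
  have h3 := hFb t htIcc
  constructor
  · have : F t ≤ 4*(B+1) - 1 := by linarith
    have hC : F t ≤ 2*(4*(B+1)) + 160*(4*(B+1))^2 := by nlinarith
    exact hC
  · have h2 := (hest t htIcc).2
    have hFt : F t ≤ 4*(B+1) - 1 := by linarith
    calc ∑ k ∈ Finset.Icc (-(N:ℤ)) (N:ℤ), (1 + (k:ℝ)^2)^α * ‖dU t k‖^2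
        ≤ 2 * F t + 160 * (F t)^2 := h2
      _ ≤ 2*(4*(B+1)) + 160*(4*(B+1))^2 := by nlinarith [hFnn t]
end
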